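/- arXiv:2406.19766 — 8 statements merged into one kernel-verified Lean document; each statement's English description precedes it below -/
import Mathlib

section
/- Let N be a normal subgroup of a finite group G and p a prime such that G/N is a p-group. Fix g ∈ G and an integer i coprime to p. Then the map x ↦ x^i is a bijection from the set of p-elements in the coset gN onto the set of p-elements in the coset g^iN. -/
lemma aux_pow_eq {H : Type*} [Group H] (x : H) {p a b n : ℕ} (hp : 1 < p)
    (hk : ∃ k, orderOf x = p ^ k) (hcard : orderOf x ≤ n)
    (hmod : a ≡ b [MOD p ^ n]) : x ^ a = x ^ b := by
  obtain ⟨k, hk⟩ := hk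
  have hkpk : k < p ^ k := Nat.lt_pow_self (n := k) hp
  have hkn : k ≤ n := by omega
  rw [pow_eq_pow_iff_modEq, hk]
  exact hmod.of_dvd (pow_dvd_pow p hkn)

/-- If `N ⊴ G` is such that `G/N` is a `p`-group, `g ∈ G` and `i` is
coprime to `p`, then `x ↦ x^i` is a bijection from the set of `p`-elements of the
coset `gN` onto the set of `p`-elements of the coset `g^i N`. -/
theorem stmt1 {G : Type*} [Group G] [Finite G] (p : ℕ) [Fact p.Prime]
    (N : Subgroup G) [N.Normal] (hquot : IsPGroup p (G ⧸ N)) (g : G) (i : ℕ)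
    (hi : Nat.Coprime p i) :
    Set.BijOn (fun x : G => x ^ i)
      {x : G | (∃ k : ℕ, orderOf x = p ^ k) ∧ g⁻¹ * x ∈ N}
      {x : G | (∃ k : ℕ, orderOf x = p ^ k) ∧ (g ^ i)⁻¹ * x ∈ N} := by
  have hp : 1 < p := (Fact.out : p.Prime).one_lt
  set e := Nat.card G with he
  have he0 : 0 < e := Nat.card_pos
  have hM : 1 < p ^ e := by
    calc 1 < p := hp
    _ = p ^ 1 := (pow_one p).symm
    _ ≤ p ^ e := Nat.pow_le_pow_right (by omega) he0
  have hcop : Nat.Coprime i (p ^ e) := (hi.symm).pow_right e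
  obtain ⟨j, -, hj⟩ := Nat.exists_mul_mod_eq_one_of_coprime hcop hM
  have hmod : i * j ≡ 1 [MOD p ^ e] := by
    unfold Nat.ModEq
    rw [hj, Nat.mod_eq_of_lt hM]
  -- orderOf bounds
  have hle : ∀ x : G, orderOf x ≤ e := fun x =>
    Nat.le_of_dvd Nat.card_pos (orderOf_dvd_natCard x)
  have hfix : ∀ x : G, (∃ k, orderOf x = p ^ k) → x ^ (i * j) = x := by
    intro x hx
    have := aux_pow_eq x hp hx (hle x) hmod
    simpa using this
  -- quotient facts
  have hgbar : ∃ k, orderOf ((g : G ⧸ N)) = p ^ k := (IsPGroup.iff_orderOf.mp hquot) g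
  have hgbar_le : orderOf ((g : G ⧸ N)) ≤ e := by
    have h1 : orderOf ((g : G ⧸ N)) ∣ orderOf g :=
      orderOf_map_dvd (QuotientGroup.mk' N) g
    exact le_trans (Nat.le_of_dvd (orderOf_pos g) h1) (hle g)
  have hgfix : ((g : G ⧸ N)) ^ (i * j) = (g : G ⧸ N) := by
    have := aux_pow_eq ((g : G ⧸ N)) hp hgbar hgbar_le hmod
    simpa using this
  refine ⟨?_, ?_, ?_⟩
  · -- MapsTo
    rintro x ⟨⟨k, hk⟩, hxN⟩
    refine ⟨?_, ?_⟩
    · have hdvd : orderOf (x ^ i) ∣ p ^ k := hk ▸ orderOf_pow_dvd i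
      obtain ⟨m, _, hm⟩ := (Nat.dvd_prime_pow (Fact.out : p.Prime)).mp hdvd
      exact ⟨m, hm⟩
    · have hq : (g : G ⧸ N) = (x : G ⧸ N) := (QuotientGroup.eq).mpr hxN
      have : ((g ^ i : G) : G ⧸ N) = ((x ^ i : G) : G ⧸ N) := by
        rw [QuotientGroup.mk_pow, QuotientGroup.mk_pow, hq]
      exact (QuotientGroup.eq).mp this
  · -- InjOn
    rintro x ⟨hx, _⟩ y ⟨hy, _⟩ hxy
    simp only at hxy
    have : x ^ (i * j) = y ^ (i * j) := by
      rw [pow_mul, pow_mul, hxy]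
    rw [hfix x hx, hfix y hy] at this
    exact this
  · -- SurjOn
    rintro y ⟨⟨k, hk⟩, hyN⟩
    refine ⟨y ^ j, ⟨?_, ?_⟩, ?_⟩
    · have hdvd : orderOf (y ^ j) ∣ p ^ k := hk ▸ orderOf_pow_dvd j
      obtain ⟨m, _, hm⟩ := (Nat.dvd_prime_pow (Fact.out : p.Prime)).mp hdvd
      exact ⟨m, hm⟩
    · -- g⁻¹ * y ^ j ∈ N
      have hq : ((g ^ i : G) : G ⧸ N) = (y : G ⧸ N) := (QuotientGroup.eq).mpr hyN
      have : (g : G ⧸ N) = ((y ^ j : G) : G ⧸ N) := by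
        rw [QuotientGroup.mk_pow]
        rw [QuotientGroup.mk_pow] at hq
        rw [← hq, ← pow_mul]
        exact hgfix.symm
      exact (QuotientGroup.eq).mp this
    · simp only
      rw [← pow_mul, mul_comm j i]
      exact hfix y ⟨k, hk⟩
end

section
/- Let G be a finite group, N an abelian normal subgroup of G whose order is coprime to p, and g a p-element of G. If C_N(g) ≠ N, then P_p(g,G) ≤ P_p(gN, G/N)/2, where P_p(g,G) is the probability that a uniformly random element x of G satisfies that ⟨g,x⟩ is a p-group. -/
open Subgroup Pointwise

section Aux

variable {G : Type*} [Group G] [Finite G]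

omit [Finite G] in
lemma aux_conj_smul_mem_iff (m x : G) (H : Subgroup G) :
    x ∈ MulAut.conj m • H ↔ m⁻¹ * x * m ∈ H := by
  rw [Subgroup.mem_pointwise_smul_iff_inv_smul_mem]
  have h : ((MulAut.conj m)⁻¹ : MulAut G) • x = m⁻¹ * x * m := MulAut.conj_inv_apply m x
  rw [h]

/-- A `p`-subgroup intersects a subgroup of coprime order trivially. -/
lemma aux_inf_bot (p : ℕ) [Fact p.Prime] {N H : Subgroup G}
    (hcop : Nat.Coprime (Nat.card N) p) (hH : IsPGroup p H) : H ⊓ N = ⊥ := by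
  rw [eq_bot_iff]
  intro x hx
  rcases Subgroup.mem_inf.mp hx with ⟨hxH, hxN⟩
  obtain ⟨k, hk⟩ := hH ⟨x, hxH⟩
  have h1 : orderOf x ∣ p ^ k := by
    have : orderOf (⟨x, hxH⟩ : H) ∣ p ^ k := orderOf_dvd_of_pow_eq_one hk
    rwa [← orderOf_injective H.subtype Subtype.coe_injective ⟨x, hxH⟩] at this
  have h2 : orderOf x ∣ Nat.card N := by
    have : orderOf (⟨x, hxN⟩ : N) ∣ Nat.card N := orderOf_dvd_natCard _
    rwa [← orderOf_injective N.subtype Subtype.coe_injective ⟨x, hxN⟩] at this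
  have h3 : orderOf x ∣ 1 := (hcop.pow_right k) ▸ Nat.dvd_gcd h2 h1
  simpa [Subgroup.mem_bot] using orderOf_eq_one_iff.mp (Nat.dvd_one.mp h3)

/-- Cardinality of a complement of a normal subgroup. -/
lemma aux_card_complement {K : Type*} [Group K] [Finite K] (N' H : Subgroup K) [N'.Normal]
    (hbot : H ⊓ N' = ⊥) (htop : N' ⊔ H = ⊤) : Nat.card H = Nat.card (K ⧸ N') := by
  refine Nat.card_congr (Equiv.ofBijective ((QuotientGroup.mk' N').comp H.subtype) ⟨?_, ?_⟩)
  · intro a b hab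
    have h : (a : K)⁻¹ * b ∈ N' := (QuotientGroup.eq).mp hab
    have hmem : (a : K)⁻¹ * b ∈ H ⊓ N' :=
      Subgroup.mem_inf.mpr ⟨mul_mem (inv_mem a.2) b.2, h⟩
    rw [hbot, Subgroup.mem_bot] at hmem
    exact Subtype.ext (inv_mul_eq_one.mp hmem)
  · intro z
    obtain ⟨k, rfl⟩ := QuotientGroup.mk'_surjective N' z
    have hk : k ∈ ((N' ⊔ H : Subgroup K) : Set K) := by rw [htop]; trivial
    rw [Subgroup.normal_mul] at hk
    obtain ⟨a, ha, b, hb, rfl⟩ := hk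
    refine ⟨⟨b, hb⟩, ?_⟩
    have ha1 : (QuotientGroup.mk' N') a = 1 := (QuotientGroup.eq_one_iff a).mpr ha
    simp [map_mul, ha1]

/-- The key conjugacy statement. -/
lemma aux_exists_conj (p : ℕ) [Fact p.Prime] {N : Subgroup G} [N.Normal]
    (hcop : Nat.Coprime (Nat.card N) p) (g x0 : G)
    (hP : IsPGroup p (closure ({g, x0} : Set G))) {n : G} (hn : n ∈ N)
    (hQ : IsPGroup p (closure ({g, x0 * n} : Set G))) :
    ∃ m : G, m ∈ N ∧ g * m = m * g ∧
      closure ({g, x0 * n} : Set G) = MulAut.conj m • closure ({g, x0} : Set G) := by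
  classical
  set P := closure ({g, x0} : Set G) with hPdef
  set Q := closure ({g, x0 * n} : Set G) with hQdef
  have hgP : g ∈ P := subset_closure (by simp)
  have hx0P : x0 ∈ P := subset_closure (by simp)
  have hgQ : g ∈ Q := subset_closure (by simp)
  have hxnQ : x0 * n ∈ Q := subset_closure (by simp)
  set K := N ⊔ P with hKdef
  have hNK : N ≤ K := le_sup_left
  have hPK : P ≤ K := le_sup_right
  have hQK : Q ≤ K := by
    have hs : ({g, x0 * n} : Set G) ⊆ ↑K := by
      rw [Set.insert_subset_iff, Set.singleton_subset_iff]
      exact ⟨hPK hgP, mul_mem (hPK hx0P) (hNK hn)⟩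
    exact (closure_le K).mpr hs
  have hPN : P ⊓ N = ⊥ := aux_inf_bot p hcop hP
  have hQN : Q ⊓ N = ⊥ := aux_inf_bot p hcop hQ
  have hKQ : N ⊔ Q = K := by
    refine le_antisymm (sup_le hNK hQK) (sup_le le_sup_left ?_)
    have hs : ({g, x0 * n * n⁻¹} : Set G) ⊆ ↑(N ⊔ Q) := by
      rw [Set.insert_subset_iff, Set.singleton_subset_iff]
      exact ⟨mem_sup_right hgQ, mul_mem (mem_sup_right hxnQ) (mem_sup_left (inv_mem hn))⟩
    have hs' : ({g, x0} : Set G) ⊆ ↑(N ⊔ Q) := by simpa using hs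
    exact (closure_le (N ⊔ Q)).mpr hs'
  -- move to the subgroup K
  set P' := P.subgroupOf K with hP'def
  set Q' := Q.subgroupOf K with hQ'def
  set N' := N.subgroupOf K with hN'def
  have hP' : IsPGroup p P' := hP.comap_subtype
  have hQ' : IsPGroup p Q' := hQ.comap_subtype
  have cardN' : Nat.card N' = Nat.card N :=
    Nat.card_congr (Subgroup.subgroupOfEquivOfLe hNK).toEquiv
  have hbotQ' : Q' ⊓ N' = ⊥ := by
    rw [eq_bot_iff]
    intro x hx
    rcases Subgroup.mem_inf.mp hx with ⟨h1, h2⟩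
    have h : (x : G) ∈ Q ⊓ N := Subgroup.mem_inf.mpr ⟨h1, h2⟩
    rw [hQN, Subgroup.mem_bot] at h
    simpa [Subgroup.mem_bot] using Subtype.ext h
  have hbotP' : P' ⊓ N' = ⊥ := by
    rw [eq_bot_iff]
    intro x hx
    rcases Subgroup.mem_inf.mp hx with ⟨h1, h2⟩
    have h : (x : G) ∈ P ⊓ N := Subgroup.mem_inf.mpr ⟨h1, h2⟩
    rw [hPN, Subgroup.mem_bot] at h
    simpa [Subgroup.mem_bot] using Subtype.ext h
  have htop_aux : ∀ (H : Subgroup G), H ≤ K → N ⊔ H = K → N' ⊔ H.subgroupOf K = ⊤ := by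
    intro H hHK hNH
    rw [eq_top_iff]
    intro k _
    have hk : (k : G) ∈ ((N ⊔ H : Subgroup G) : Set G) := by rw [hNH]; exact k.2
    rw [Subgroup.normal_mul] at hk
    obtain ⟨a, ha, b, hb, hab⟩ := hk
    have haK : a ∈ K := hNK ha
    have hbK : b ∈ K := hHK hb
    have hk2 : k = (⟨a, haK⟩ : K) * ⟨b, hbK⟩ := Subtype.ext (by simpa using hab.symm)
    rw [hk2]
    exact mul_mem (mem_sup_left (Subgroup.mem_subgroupOf.mpr ha))
      (mem_sup_right (Subgroup.mem_subgroupOf.mpr hb))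
  have htopQ' : N' ⊔ Q' = ⊤ := htop_aux Q hQK hKQ
  have htopP' : N' ⊔ P' = ⊤ := htop_aux P hPK rfl
  have cardPQ : Nat.card Q' = Nat.card P' := by
    rw [aux_card_complement N' Q' hbotQ' htopQ', aux_card_complement N' P' hbotP' htopP']
  -- Sylow theory in K
  haveI : Finite (Sylow p K) :=
    Finite.of_injective (fun R : Sylow p K => (R : Subgroup K))
      (fun _ _ h => Sylow.ext h)
  obtain ⟨a, ha⟩ := (IsPGroup.iff_card).mp hQ'
  have key : ∀ (H' : Subgroup K), IsPGroup p H' → Nat.card H' = p ^ a →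
      ∀ R : Sylow p K, H' ≤ R → H' = R := by
    intro H' hH' hcard R hle
    refine (Subgroup.eq_of_le_of_card_ge hle ?_)
    obtain ⟨b, hb⟩ := (IsPGroup.iff_card).mp R.2
    have hdvd : Nat.card R ∣ Nat.card K := Subgroup.card_subgroup_dvd_card _
    have hKcard : Nat.card K = Nat.card N' * Nat.card Q' := by
      have h1 := Subgroup.card_eq_card_quotient_mul_card_subgroup N'
      rw [aux_card_complement N' Q' hbotQ' htopQ']
      rw [h1, mul_comm]
    have hb2 : (p : ℕ) ^ b ∣ Nat.card N' * p ^ a := by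
      rw [← ha, ← hKcard, ← hb]; exact hdvd
    have hcop' : Nat.Coprime (p ^ b) (Nat.card N') := by
      rw [cardN']
      exact (hcop.pow_right b).symm
    have hdvd2 : (p : ℕ) ^ b ∣ p ^ a := Nat.Coprime.dvd_of_dvd_mul_left hcop' hb2
    calc Nat.card R = p ^ b := hb
      _ ≤ p ^ a := Nat.le_of_dvd (pow_pos (Nat.Prime.pos Fact.out) a) hdvd2
      _ = Nat.card H' := hcard.symm
  obtain ⟨RQ, hRQ⟩ := hQ'.exists_le_sylow
  obtain ⟨RP, hRP⟩ := hP'.exists_le_sylow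
  have hQR : Q' = RQ := key Q' hQ' ha RQ hRQ
  have hPR : P' = RP := key P' hP' (cardPQ.symm.trans ha) RP hRP
  obtain ⟨k, hk⟩ := MulAction.exists_smul_eq K RP RQ
  have hconj : MulAut.conj k • P' = Q' := by
    rw [hQR, hPR, ← hk]
    exact (Sylow.coe_subgroup_smul).symm
  -- descend back to G
  have hconjG : MulAut.conj (k : G) • P = Q := by
    ext x
    rw [aux_conj_smul_mem_iff]
    constructor
    · intro hx
      have hxK : x ∈ K := by
        have h1 : (k : G) * ((k : G)⁻¹ * x * (k : G)) * (k : G)⁻¹ ∈ K :=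
          mul_mem (mul_mem k.2 (hPK hx)) (inv_mem k.2)
        have h2 : (k : G) * ((k : G)⁻¹ * x * (k : G)) * (k : G)⁻¹ = x := by group
        rwa [h2] at h1
      have hmem : (⟨x, hxK⟩ : K) ∈ MulAut.conj k • P' := by
        rw [aux_conj_smul_mem_iff, Subgroup.mem_subgroupOf]
        simpa using hx
      rw [hconj] at hmem
      exact Subgroup.mem_subgroupOf.mp hmem
    · intro hx
      have hmem : (⟨x, hQK hx⟩ : K) ∈ MulAut.conj k • P' := by
        rw [hconj]; exact Subgroup.mem_subgroupOf.mpr hx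
      rw [aux_conj_smul_mem_iff, Subgroup.mem_subgroupOf] at hmem
      simpa using hmem
  -- write k = m * u with m ∈ N, u ∈ P
  have hkK : (k : G) ∈ ((N ⊔ P : Subgroup G) : Set G) := k.2
  rw [Subgroup.normal_mul] at hkK
  obtain ⟨m, hm, u, hu, hmu⟩ := hkK
  have hsmul_u : MulAut.conj u • P = P := by
    ext x
    rw [aux_conj_smul_mem_iff]
    constructor
    · intro hx
      have h1 := mul_mem (mul_mem hu hx) (inv_mem hu)
      have h2 : u * (u⁻¹ * x * u) * u⁻¹ = x := by group
      rwa [h2] at h1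
    · intro hx
      exact mul_mem (mul_mem (inv_mem hu) hx) hu
  have hQm : MulAut.conj m • P = Q := by
    rw [← hconjG, ← hmu, map_mul, mul_smul, hsmul_u]
  -- m centralizes g
  have hc1 : m⁻¹ * g * m ∈ P := by
    have h := hgQ
    rw [← hQm, aux_conj_smul_mem_iff] at h
    exact h
  have hcP : g⁻¹ * (m⁻¹ * g * m) ∈ P := mul_mem (inv_mem hgP) hc1
  have hcN : g⁻¹ * (m⁻¹ * g * m) ∈ N := by
    have h1 : g⁻¹ * m⁻¹ * (g⁻¹)⁻¹ ∈ N := Subgroup.Normal.conj_mem ‹N.Normal› m⁻¹ (inv_mem hm) g⁻¹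
    have h2 : g⁻¹ * (m⁻¹ * g * m) = (g⁻¹ * m⁻¹ * (g⁻¹)⁻¹) * m := by group
    rw [h2]
    exact mul_mem h1 hm
  have hc : g⁻¹ * (m⁻¹ * g * m) = 1 := by
    have h : g⁻¹ * (m⁻¹ * g * m) ∈ P ⊓ N := Subgroup.mem_inf.mpr ⟨hcP, hcN⟩
    rwa [hPN, Subgroup.mem_bot] at h
  refine ⟨m, hm, ?_, hQm.symm⟩
  have h2 : m⁻¹ * g * m = g := by
    have h3 := inv_mul_eq_one.mp hc
    exact h3.symm
  calc g * m = m * (m⁻¹ * g * m) := by group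
    _ = m * g := by rw [h2]

end Aux

/-- Let `N` be an abelian normal subgroup of the finite group `G` with
`|N|` coprime to `p`, and let `g` be a `p`-element of `G`. If `C_N(g) ≠ N`, then
`P_p(g,G) ≤ P_p(gN, G/N) / 2`. -/
theorem stmt7 {G : Type*} [Group G] [Finite G] (p : ℕ) [Fact p.Prime]
    (N : Subgroup G) [N.Normal] (habel : ∀ x ∈ N, ∀ y ∈ N, x * y = y * x)
    (hcop : Nat.Coprime (Nat.card N) p)
    (g : G) (hg : ∃ k : ℕ, orderOf g = p ^ k)
    (hcent : ∃ n ∈ N, g * n ≠ n * g) :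
    (Nat.card {x : G // IsPGroup p (Subgroup.closure {g, x})} : ℝ) / Nat.card G ≤
      ((Nat.card {y : G ⧸ N //
          IsPGroup p (Subgroup.closure {(QuotientGroup.mk g : G ⧸ N), y})} : ℝ) /
        Nat.card (G ⧸ N)) / 2 := by
  classical
  set D := N ⊓ Subgroup.centralizer {g} with hDdef
  -- Step 1: 2 * |D| ≤ |N|
  have hDN : D ≤ N := inf_le_left
  have hDne : D ≠ N := by
    intro h
    obtain ⟨n, hnN, hnc⟩ := hcent
    have hn : n ∈ D := h ▸ hnN
    exact hnc (Subgroup.mem_centralizer_iff.mp (Subgroup.mem_inf.mp hn).2 g rfl)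
  have hD2 : 2 * Nat.card D ≤ Nat.card N := by
    obtain ⟨c, hc⟩ := Subgroup.card_dvd_of_le hDN
    have hDpos : 0 < Nat.card D := Nat.card_pos
    have hc0 : c ≠ 0 := by
      rintro rfl
      have := Nat.card_pos (α := N)
      omega
    have hc1 : c ≠ 1 := by
      rintro rfl
      rw [mul_one] at hc
      exact hDne (Subgroup.eq_of_le_of_card_ge hDN hc.le)
    have h2c : 2 ≤ c := by omega
    calc 2 * Nat.card D ≤ c * Nat.card D := Nat.mul_le_mul_right _ h2c
      _ = Nat.card N := by rw [hc, mul_comm]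
  -- Step 2: fiber bound
  have fiber_bound : ∀ x0 : G, IsPGroup p (Subgroup.closure {g, x0}) →
      Nat.card {n : N // IsPGroup p (Subgroup.closure {g, x0 * (n : G)})} ≤ Nat.card D := by
    intro x0 hP
    have hexists : ∀ s : {n : N // IsPGroup p (Subgroup.closure {g, x0 * (n : G)})},
        ∃ m : D, Subgroup.closure {g, x0 * (s.1 : G)} =
          MulAut.conj (m : G) • Subgroup.closure {g, x0} := by
      intro s
      obtain ⟨m, hmN, hmg, hmeq⟩ := aux_exists_conj p hcop g x0 hP s.1.2 s.2
      refine ⟨⟨m, Subgroup.mem_inf.mpr ⟨hmN, Subgroup.mem_centralizer_iff.mpr ?_⟩⟩, hmeq⟩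
      rintro y rfl
      exact hmg
    choose φ hφ using hexists
    apply Nat.card_le_card_of_injective φ
    intro s t hst
    have hQeq : Subgroup.closure {g, x0 * (s.1 : G)} = Subgroup.closure {g, x0 * (t.1 : G)} := by
      rw [hφ s, hφ t, hst]
    have h1 : x0 * (s.1 : G) ∈ Subgroup.closure {g, x0 * (t.1 : G)} := by
      rw [← hQeq]
      exact Subgroup.subset_closure (by simp)
    have h2 : x0 * (t.1 : G) ∈ Subgroup.closure {g, x0 * (t.1 : G)} :=
      Subgroup.subset_closure (by simp)
    have h3 : (x0 * (s.1 : G))⁻¹ * (x0 * (t.1 : G)) ∈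
        Subgroup.closure {g, x0 * (t.1 : G)} ⊓ N := by
      refine Subgroup.mem_inf.mpr ⟨mul_mem (inv_mem h1) h2, ?_⟩
      have he : (x0 * (s.1 : G))⁻¹ * (x0 * (t.1 : G)) = (s.1 : G)⁻¹ * (t.1 : G) := by group
      rw [he]
      exact mul_mem (inv_mem s.1.2) t.1.2
    rw [aux_inf_bot p hcop t.2, Subgroup.mem_bot] at h3
    have h4 : (x0 * (s.1 : G)) = (x0 * (t.1 : G)) := inv_mul_eq_one.mp h3
    exact Subtype.ext (Subtype.ext (mul_left_cancel h4))
  -- Step 3: counting via the quotient map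
  set A := {x : G // IsPGroup p (Subgroup.closure {g, x})} with hAdef
  set B := {y : G ⧸ N //
      IsPGroup p (Subgroup.closure {(QuotientGroup.mk g : G ⧸ N), y})} with hBdef
  have hmap : ∀ x : G, IsPGroup p (Subgroup.closure {g, x}) →
      IsPGroup p (Subgroup.closure
        {(QuotientGroup.mk g : G ⧸ N), (QuotientGroup.mk x : G ⧸ N)}) := by
    intro x hx
    have hcl : Subgroup.closure {(QuotientGroup.mk g : G ⧸ N), (QuotientGroup.mk x : G ⧸ N)} =
        (Subgroup.closure {g, x}).map (QuotientGroup.mk' N) := by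
      rw [MonoidHom.map_closure, Set.image_pair]
      rfl
    rw [hcl]
    exact hx.map _
  let f : A → B := fun x => ⟨QuotientGroup.mk x.1, hmap x.1 x.2⟩
  -- fibers of f
  have hfiber : ∀ b : B, Nat.card {a : A // f a = b} ≤ Nat.card D := by
    intro b
    rcases isEmpty_or_nonempty {a : A // f a = b} with hE | hNE
    · simp [Nat.card_of_isEmpty]
    · obtain ⟨⟨⟨x0, hx0⟩, hfx0⟩⟩ := hNE
      have key : ∀ a : {a : A // f a = b}, x0⁻¹ * (a.1.1 : G) ∈ N := by
        intro a
        have h1 : (QuotientGroup.mk x0 : G ⧸ N) = b.1 := congrArg Subtype.val hfx0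
        have h2 : (QuotientGroup.mk a.1.1 : G ⧸ N) = b.1 := congrArg Subtype.val a.2
        exact (QuotientGroup.eq).mp (h1.trans h2.symm)
      let ψ : {a : A // f a = b} → {n : N // IsPGroup p (Subgroup.closure {g, x0 * (n : G)})} :=
        fun a => ⟨⟨x0⁻¹ * a.1.1, key a⟩, by
          have he : x0 * (x0⁻¹ * a.1.1) = a.1.1 := by group
          rw [he]
          exact a.1.2⟩
      have hinj : Function.Injective ψ := by
        intro a a' haa
        have h1 : x0⁻¹ * a.1.1 = x0⁻¹ * a'.1.1 := by
          have := congrArg (fun z => ((z.1 : N) : G)) haa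
          exact this
        exact Subtype.ext (Subtype.ext (mul_left_cancel h1))
      calc Nat.card {a : A // f a = b} ≤
          Nat.card {n : N // IsPGroup p (Subgroup.closure {g, x0 * (n : G)})} :=
            Nat.card_le_card_of_injective ψ hinj
        _ ≤ Nat.card D := fiber_bound x0 hx0
  -- summing over fibers
  haveI : Fintype B := Fintype.ofFinite B
  haveI : Fintype A := Fintype.ofFinite A
  haveI : Fintype N := Fintype.ofFinite N
  have hcardA : Nat.card A = ∑ b : B, Nat.card {a : A // f a = b} := by
    rw [← Nat.card_congr (Equiv.sigmaFiberEquiv f)]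
    rw [Nat.card_eq_fintype_card, Fintype.card_sigma]
    simp [Nat.card_eq_fintype_card]
  have hkey : 2 * Nat.card A ≤ Nat.card B * Nat.card N := by
    rw [hcardA, Finset.mul_sum]
    calc ∑ b : B, 2 * Nat.card {a : A // f a = b}
        ≤ ∑ _b : B, Nat.card N := by
          refine Finset.sum_le_sum fun b _ => ?_
          calc 2 * Nat.card {a : A // f a = b} ≤ 2 * Nat.card D :=
                Nat.mul_le_mul_left 2 (hfiber b)
            _ ≤ Nat.card N := hD2
      _ = Nat.card B * Nat.card N := by
          rw [Finset.sum_const, Finset.card_univ, smul_eq_mul, Nat.card_eq_fintype_card,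
            Nat.card_eq_fintype_card]
  -- Step 4: arithmetic
  have hGcard : Nat.card G = Nat.card (G ⧸ N) * Nat.card N :=
    Subgroup.card_eq_card_quotient_mul_card_subgroup N
  have hGpos : 0 < Nat.card G := Nat.card_pos
  have hQpos : 0 < Nat.card (G ⧸ N) := Nat.card_pos
  have hNpos : 0 < Nat.card N := Nat.card_pos
  rw [div_div]
  rw [div_le_div_iff₀ (by positivity) (by positivity)]
  have hcast : (2 * Nat.card A : ℝ) ≤ (Nat.card B : ℝ) * Nat.card N := by
    exact_mod_cast hkey
  calc (Nat.card A : ℝ) * ((Nat.card (G ⧸ N) : ℝ) * 2)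
      = (2 * Nat.card A) * (Nat.card (G ⧸ N)) := by ring
    _ ≤ ((Nat.card B : ℝ) * Nat.card N) * Nat.card (G ⧸ N) :=
        mul_le_mul_of_nonneg_right hcast (by positivity)
    _ = (Nat.card B : ℝ) * (Nat.card (G ⧸ N) * Nat.card N) := by ring
    _ = (Nat.card B : ℝ) * Nat.card G := by
        have hGR : (Nat.card G : ℝ) = (Nat.card (G ⧸ N) : ℝ) * (Nat.card N : ℝ) := by
          exact_mod_cast hGcard
        rw [hGR]
end

section
/- Let G be a finite group, N an abelian normal subgroup with |N| coprime to p, g a p-element of G, and x ∈ G such that ⟨gN, xN⟩ is a p-subgroup of G/N. Then the number of n ∈ N such that ⟨g, xn⟩ is a p-group equals |C_N(g) : C_N(g) ∩ C_N(x')| for some x' in the coset xN for which ⟨g,x'⟩ is a p-group; in particular this number of n equals the number of C_N(g)-conjugates of such an x'. -/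
open Subgroup Pointwise

lemma closure_pair_map {G : Type*} [Group G] (H : Subgroup G) (a b : H) :
    (Subgroup.closure {a, b}).map H.subtype = Subgroup.closure {(a : G), (b : G)} := by
  rw [MonoidHom.map_closure]; congr 1; simp [Set.image_pair]

lemma pgroup_closure_of_pgroup_closure {G : Type*} [Group G] (p : ℕ) (H : Subgroup G) (a b : H)
    (h : IsPGroup p (Subgroup.closure {(a : G), (b : G)})) :
    IsPGroup p (Subgroup.closure ({a, b} : Set H)) := by
  rw [← closure_pair_map] at h
  exact h.of_equiv (Subgroup.equivMapOfInjective _ H.subtype H.subtype_injective).symm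

lemma aux_main {G : Type*} [Group G] [Finite G] (p : ℕ) [Fact p.Prime]
    (N : Subgroup G) [N.Normal]
    (hcop : Nat.Coprime (Nat.card N) p)
    (g : G) (hg : ∃ k : ℕ, orderOf g = p ^ k)
    (x : G)
    (hx : IsPGroup p (Subgroup.closure
      {(QuotientGroup.mk g : G ⧸ N), (QuotientGroup.mk x : G ⧸ N)})) :
    ∃ x' : G, x⁻¹ * x' ∈ N ∧ IsPGroup p (Subgroup.closure {g, x'}) ∧
      ∀ n ∈ N, (IsPGroup p (Subgroup.closure {g, x * n}) ↔
        ∃ c ∈ Subgroup.centralizer {g} ⊓ N, x * n = c * x' * c⁻¹) := by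
  classical
  set Qbar : Subgroup (G ⧸ N) := Subgroup.closure
      {(QuotientGroup.mk g : G ⧸ N), (QuotientGroup.mk x : G ⧸ N)} with hQbar
  set H : Subgroup G := Qbar.comap (QuotientGroup.mk' N) with hH
  have hNH : N ≤ H := by
    intro n hn
    simp only [hH, Subgroup.mem_comap]
    have : QuotientGroup.mk' N n = 1 := by
      simpa [QuotientGroup.mk'_apply, QuotientGroup.eq_one_iff] using hn
    rw [this]; exact Qbar.one_mem
  have hgH : g ∈ H := by
    simp only [hH, Subgroup.mem_comap, QuotientGroup.mk'_apply]
    exact Subgroup.subset_closure (Set.mem_insert _ _)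
  have hxH : x ∈ H := by
    simp only [hH, Subgroup.mem_comap, QuotientGroup.mk'_apply]
    exact Subgroup.subset_closure (Set.mem_insert_of_mem _ rfl)
  set N' : Subgroup H := N.subgroupOf H with hN'
  have hcardN' : Nat.card N' = Nat.card N :=
    Nat.card_congr (Subgroup.subgroupOfEquivOfLe hNH).toEquiv
  -- quotient H / N' is a p-group
  set φ : H →* G ⧸ N := (QuotientGroup.mk' N).comp H.subtype with hφ
  have hker : φ.ker = N' := by
    ext y
    simp [hφ, MonoidHom.mem_ker, hN', Subgroup.mem_subgroupOf, QuotientGroup.eq_one_iff]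
  have hrange : φ.range = Qbar := by
    rw [hφ, MonoidHom.range_comp, Subgroup.range_subtype, hH]
    exact Subgroup.map_comap_eq_self_of_surjective (QuotientGroup.mk'_surjective N) _
  have hquot : IsPGroup p (H ⧸ N') := by
    have h1 : IsPGroup p (H ⧸ φ.ker) :=
      (hx.of_equiv (MulEquiv.subgroupCongr hrange.symm)).of_equiv
        (QuotientGroup.quotientKerEquivRange φ).symm
    exact h1.of_equiv (QuotientGroup.quotientMulEquivOfEq hker)
  obtain ⟨a, hcarda⟩ := (IsPGroup.iff_card).mp hquot
  have hindex : N'.index = p ^ a := by rw [Subgroup.index_eq_card, hcarda]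
  -- Sylow subgroup of H containing g
  have hgH' : IsPGroup p (Subgroup.zpowers (⟨g, hgH⟩ : H)) := by
    obtain ⟨k, hk⟩ := hg
    refine IsPGroup.of_card (n := k) ?_
    rw [Nat.card_zpowers, orderOf_mk, hk]
  obtain ⟨P, hP⟩ := hgH'.exists_le_sylow
  have hgP : (⟨g, hgH⟩ : H) ∈ P := hP (Subgroup.mem_zpowers _)
  have hcardH : Nat.card H = Nat.card N * p ^ a := by
    rw [← hcardN', ← hindex]
    exact (Subgroup.card_mul_index N').symm
  have hpndvd : ¬ p ∣ Nat.card N :=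
    (Nat.Prime.coprime_iff_not_dvd (Fact.out)).mp hcop.symm
  have hcardP : Nat.card P = p ^ a := by
    rw [P.card_eq_multiplicity, hcardH]
    congr 1
    rw [Nat.factorization_mul (Nat.card_pos).ne' (pow_ne_zero a (Fact.out : p.Prime).ne_zero),
      Finsupp.add_apply, Nat.factorization_eq_zero_of_not_dvd hpndvd,
      (Fact.out : p.Prime).factorization_pow, Finsupp.single_eq_same, zero_add]
  have hcompl : IsComplement' N' P := by
    refine Subgroup.isComplement'_of_coprime ?_ ?_
    · rw [hcardP, hcardN', ← hindex, ← hcardN']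
      exact Subgroup.card_mul_index N'
    · rw [hcardP, hcardN']
      exact hcop.pow_right a
  -- decompose x
  obtain ⟨⟨n0, q0⟩, hdec⟩ := (hcompl.existsUnique ⟨x, hxH⟩).exists
  have hn0N : ((↑n0 : H) : G) ∈ N := by
    have h := n0.2
    exact Subgroup.mem_subgroupOf.mp h
  have hq0P : (↑q0 : H) ∈ P := q0.2
  set x' : G := ((↑q0 : H) : G) with hx'def
  have hxeq : x = ((↑n0 : H) : G) * x' := by
    have : ((↑n0 * ↑q0 : H) : G) = ((⟨x, hxH⟩ : H) : G) := by rw [hdec]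
    simpa using this.symm
  have hxinv : x⁻¹ * x' ∈ N := by
    rw [hxeq]
    have : (((↑n0 : H) : G) * x')⁻¹ * x' = x'⁻¹ * ((↑n0 : H) : G)⁻¹ * x' := by group
    rw [this]
    have h1 : x'⁻¹ * ((↑n0 : H) : G)⁻¹ * (x'⁻¹)⁻¹ ∈ N :=
      (inferInstance : N.Normal).conj_mem _ (N.inv_mem hn0N) x'⁻¹
    simpa using h1
  have hpx' : IsPGroup p (Subgroup.closure {g, x'}) := by
    have hle : Subgroup.closure {g, x'} ≤ (P : Subgroup H).map H.subtype := by
      rw [Subgroup.closure_le]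
      intro y hy
      rcases Set.mem_insert_iff.mp hy with h1 | h1
      · rw [h1]
        exact ⟨⟨g, hgH⟩, hgP, rfl⟩
      · rw [Set.mem_singleton_iff.mp h1]
        exact ⟨↑q0, hq0P, hx'def.symm⟩
    exact ((P.2.map H.subtype)).to_le hle
  refine ⟨x', hxinv, hpx', fun n hn => ?_⟩
  constructor
  · -- forward direction
    intro hpn
    have hxnH : x * n ∈ H := H.mul_mem hxH (hNH hn)
    have hK2 : IsPGroup p (Subgroup.closure ({⟨g, hgH⟩, ⟨x * n, hxnH⟩} : Set H)) :=
      pgroup_closure_of_pgroup_closure p H _ _ hpn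
    obtain ⟨P2, hP2⟩ := hK2.exists_le_sylow
    obtain ⟨h, hh⟩ := MulAction.exists_smul_eq H P P2
    obtain ⟨⟨m, q⟩, hmq⟩ := (hcompl.existsUnique h).exists
    have hmN : ((↑m : H) : G) ∈ N := Subgroup.mem_subgroupOf.mp m.2
    have hqsmul : (↑q : H) • P = P :=
      Sylow.smul_eq_iff_mem_normalizer.mpr (Subgroup.le_normalizer q.2)
    have hP2m : P2 = (↑m : H) • P := by
      rw [← hh, ← hmq, mul_smul, hqsmul]
    have hmem : ∀ u : H, u ∈ P2 → (↑m : H)⁻¹ * u * (↑m : H) ∈ P := by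
      intro u hu
      rw [hP2m] at hu
      have hu' : u ∈ MulAut.conj (↑m : H) • (P : Subgroup H) := hu
      have := Subgroup.mem_pointwise_smul_iff_inv_smul_mem.mp hu'
      have h' : (↑m : H)⁻¹ * (u * ↑m) ∈ (P : Subgroup H) := by
        simpa [MulAut.smul_def, mul_assoc] using this
      rw [mul_assoc]; exact h'
    -- m centralizes g
    have hga : (⟨g, hgH⟩ : H) ∈ P2 := hP2 (Subgroup.subset_closure (Set.mem_insert _ _))
    have h1 : (↑m : H)⁻¹ * ⟨g, hgH⟩ * ↑m ∈ P := hmem _ hga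
    have h2 : (⟨g, hgH⟩ : H)⁻¹ * ((↑m : H)⁻¹ * ⟨g, hgH⟩ * ↑m) ∈ (P : Subgroup H) :=
      mul_mem (inv_mem hgP) h1
    have h3 : (⟨g, hgH⟩ : H)⁻¹ * ((↑m : H)⁻¹ * ⟨g, hgH⟩ * ↑m) ∈ N' := by
      refine Subgroup.mem_subgroupOf.mpr ?_
      have heq : (((⟨g, hgH⟩ : H)⁻¹ * ((↑m : H)⁻¹ * ⟨g, hgH⟩ * ↑m) : H) : G)
          = (g⁻¹ * ((↑m : H) : G)⁻¹ * g) * ((↑m : H) : G) := by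
        push_cast; group
      rw [heq]
      refine N.mul_mem ?_ hmN
      simpa using (inferInstance : N.Normal).conj_mem _ (N.inv_mem hmN) g⁻¹
    have h4 := Subgroup.disjoint_def.mp hcompl.disjoint h3 h2
    have h5 : (⟨g, hgH⟩ : H) = (↑m : H)⁻¹ * ⟨g, hgH⟩ * ↑m := inv_mul_eq_one.mp h4
    have hgm : ((↑m : H) : G) * g = g * ((↑m : H) : G) := by
      have h6 : (↑m : H) * ⟨g, hgH⟩ = ⟨g, hgH⟩ * ↑m := by
        conv_lhs => rw [h5]
        group
      have := congrArg (fun z : H => (z : G)) h6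
      push_cast at this
      simpa using this
    -- m conjugates x' to x * n
    have hba : (⟨x * n, hxnH⟩ : H) ∈ P2 :=
      hP2 (Subgroup.subset_closure (Set.mem_insert_of_mem _ rfl))
    have hb1 : (↑m : H)⁻¹ * ⟨x * n, hxnH⟩ * ↑m ∈ P := hmem _ hba
    have hb2 : (↑q0 : H)⁻¹ * ((↑m : H)⁻¹ * ⟨x * n, hxnH⟩ * ↑m) ∈ (P : Subgroup H) :=
      mul_mem (inv_mem hq0P) hb1
    have hb3 : (↑q0 : H)⁻¹ * ((↑m : H)⁻¹ * ⟨x * n, hxnH⟩ * ↑m) ∈ N' := by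
      refine Subgroup.mem_subgroupOf.mpr ?_
      have heq : (((↑q0 : H)⁻¹ * ((↑m : H)⁻¹ * ⟨x * n, hxnH⟩ * ↑m) : H) : G)
          = (x⁻¹ * (((↑n0 : H) : G) * ((↑m : H) : G)⁻¹) * x) * (n * ((↑m : H) : G)) := by
        have hx'x : ((↑q0 : H) : G)⁻¹ = x⁻¹ * ((↑n0 : H) : G) := by
          rw [← hx'def, hxeq]; group
        push_cast
        rw [hx'x]; group
      rw [heq]
      refine N.mul_mem ?_ (N.mul_mem hn hmN)
      simpa using (inferInstance : N.Normal).conj_mem _ (N.mul_mem hn0N (N.inv_mem hmN)) x⁻¹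
    have hb4 := Subgroup.disjoint_def.mp hcompl.disjoint hb3 hb2
    have hb5 : (↑q0 : H) = (↑m : H)⁻¹ * ⟨x * n, hxnH⟩ * ↑m := inv_mul_eq_one.mp hb4
    refine ⟨((↑m : H) : G), Subgroup.mem_inf.mpr
      ⟨Subgroup.mem_centralizer_singleton_iff.mpr hgm, hmN⟩, ?_⟩
    have hb6 : (↑m : H) * ↑q0 * (↑m : H)⁻¹ = ⟨x * n, hxnH⟩ := by
      rw [hb5]; group
    have := congrArg (fun z : H => (z : G)) hb6
    push_cast at this
    rw [hx'def]
    exact this.symm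
  · -- backward direction
    rintro ⟨c, hc, hceq⟩
    obtain ⟨hc1, hc2⟩ := Subgroup.mem_inf.mp hc
    have hgc : c * g * c⁻¹ = g := by
      have := Subgroup.mem_centralizer_singleton_iff.mp hc1
      rw [this]; group
    have himg : ({g, x * n} : Set G) = (MulAut.conj c).toMonoidHom '' {g, x'} := by
      rw [Set.image_pair]
      simp only [MulEquiv.coe_toMonoidHom, MulAut.conj_apply]
      rw [hgc, hceq]
    rw [himg, ← MonoidHom.map_closure]
    exact hpx'.map _


/-- Let `N` be an abelian normal subgroup of the finite group `G` with
`|N|` coprime to `p`, `g` a `p`-element and `x ∈ G` with `⟨gN, xN⟩` a `p`-subgroup of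
`G/N`. Then there is `x'` in the coset `xN` with `⟨g, x'⟩` a `p`-group such that the
number of `n ∈ N` with `⟨g, x n⟩` a `p`-group equals `|C_N(g) : C_N(g) ∩ C_N(x')|`,
and also equals the number of conjugates of `x'` by elements of `C_N(g)`. -/
theorem stmt8 {G : Type*} [Group G] [Finite G] (p : ℕ) [Fact p.Prime]
    (N : Subgroup G) [N.Normal] (habel : ∀ a ∈ N, ∀ b ∈ N, a * b = b * a)
    (hcop : Nat.Coprime (Nat.card N) p)
    (g : G) (hg : ∃ k : ℕ, orderOf g = p ^ k)
    (x : G)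
    (hx : IsPGroup p (Subgroup.closure
      {(QuotientGroup.mk g : G ⧸ N), (QuotientGroup.mk x : G ⧸ N)})) :
    ∃ x' : G, x⁻¹ * x' ∈ N ∧ IsPGroup p (Subgroup.closure {g, x'}) ∧
      Nat.card {n : G // n ∈ N ∧ IsPGroup p (Subgroup.closure {g, x * n})} =
        (Subgroup.centralizer {x'}).relIndex (Subgroup.centralizer {g} ⊓ N) ∧
      Nat.card {n : G // n ∈ N ∧ IsPGroup p (Subgroup.closure {g, x * n})} =
        Nat.card {w : G // ∃ c ∈ Subgroup.centralizer {g} ⊓ N, w = c * x' * c⁻¹} := by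
  classical
  obtain ⟨x', hx'N, hpx', hchar⟩ := aux_main p N hcop g hg x hx
  refine ⟨x', hx'N, hpx', ?_⟩
  set C : Subgroup G := Subgroup.centralizer {g} ⊓ N with hC
  -- the equivalence between the two subtypes
  have e1 : {n : G // n ∈ N ∧ IsPGroup p (Subgroup.closure {g, x * n})} ≃
      {w : G // ∃ c ∈ C, w = c * x' * c⁻¹} :=
  { toFun := fun n => ⟨x * n.1, (hchar n.1 n.2.1).mp n.2.2⟩
    invFun := fun w => by
      obtain ⟨w, hw⟩ := w
      choose c hc hweq using hw
      refine ⟨x⁻¹ * w, ⟨?_, ?_⟩⟩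
      · rw [hweq]
        have heq : x⁻¹ * (c * x' * c⁻¹) = (x⁻¹ * c * x) * (x⁻¹ * x') * c⁻¹ := by group
        rw [heq]
        have hcN : c ∈ N := (Subgroup.mem_inf.mp hc).2
        refine N.mul_mem (N.mul_mem ?_ hx'N) (N.inv_mem hcN)
        simpa using (inferInstance : N.Normal).conj_mem _ hcN x⁻¹
      · have hxw : x * (x⁻¹ * w) = w := by group
        have hmemN : x⁻¹ * w ∈ N := by
          rw [hweq]
          have heq : x⁻¹ * (c * x' * c⁻¹) = (x⁻¹ * c * x) * (x⁻¹ * x') * c⁻¹ := by group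
          rw [heq]
          have hcN : c ∈ N := (Subgroup.mem_inf.mp hc).2
          refine N.mul_mem (N.mul_mem ?_ hx'N) (N.inv_mem hcN)
          simpa using (inferInstance : N.Normal).conj_mem _ hcN x⁻¹
        exact (hchar (x⁻¹ * w) hmemN).mpr ⟨c, hc, by rw [hxw, hweq]⟩
    left_inv := fun n => by
      ext
      simp
    right_inv := fun w => by
      ext
      simp }
  -- the quotient C ⧸ K' bijects with conjugates
  set K' : Subgroup C := (Subgroup.centralizer {x'}).subgroupOf C with hK'
  have hwd : ∀ c1 c2 : C, (QuotientGroup.leftRel K') c1 c2 →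
      ((c1 : G) * x' * (c1 : G)⁻¹ : G) = (c2 : G) * x' * (c2 : G)⁻¹ := by
    intro c1 c2 hr
    have hmem : (c1⁻¹ * c2 : C) ∈ K' := (QuotientGroup.leftRel_apply).mp hr
    have hk : ((c1⁻¹ * c2 : C) : G) * x' = x' * ((c1⁻¹ * c2 : C) : G) :=
      Subgroup.mem_centralizer_singleton_iff.mp (Subgroup.mem_subgroupOf.mp hmem)
    have hk' : (c1 : G)⁻¹ * (c2 : G) * x' = x' * ((c1 : G)⁻¹ * (c2 : G)) := by
      push_cast at hk
      exact hk
    have h2 : (c2 : G) * x' * (c2 : G)⁻¹ =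
        (c1 : G) * ((c1 : G)⁻¹ * (c2 : G) * x') * (c2 : G)⁻¹ := by group
    rw [hk'] at h2
    rw [h2]
    group
  let f : C ⧸ K' → {w : G // ∃ c ∈ C, w = c * x' * c⁻¹} := fun q =>
    Quotient.liftOn' q (fun c => ⟨(c : G) * x' * (c : G)⁻¹, c, c.2, rfl⟩)
      (fun c1 c2 hr => Subtype.ext (hwd c1 c2 hr))
  have hfbij : Function.Bijective f := by
    constructor
    · intro q1 q2 h
      induction q1 using Quotient.inductionOn' with
      | h c1 =>
      induction q2 using Quotient.inductionOn' with
      | h c2 =>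
      have heq : (c1 : G) * x' * (c1 : G)⁻¹ = (c2 : G) * x' * (c2 : G)⁻¹ :=
        congrArg Subtype.val h
      refine Quotient.sound' ?_
      rw [QuotientGroup.leftRel_apply]
      refine Subgroup.mem_subgroupOf.mpr ?_
      refine Subgroup.mem_centralizer_singleton_iff.mpr ?_
      push_cast
      have : (c1 : G)⁻¹ * ((c1 : G) * x' * (c1 : G)⁻¹) * (c2 : G) =
          (c1 : G)⁻¹ * ((c2 : G) * x' * (c2 : G)⁻¹) * (c2 : G) := by rw [heq]
      calc (c1 : G)⁻¹ * (c2 : G) * x'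
          = (c1 : G)⁻¹ * ((c2 : G) * x' * (c2 : G)⁻¹) * (c2 : G) := by group
        _ = (c1 : G)⁻¹ * ((c1 : G) * x' * (c1 : G)⁻¹) * (c2 : G) := by rw [heq]
        _ = x' * ((c1 : G)⁻¹ * (c2 : G)) := by group
    · rintro ⟨w, c, hc, rfl⟩
      exact ⟨QuotientGroup.mk (⟨c, hc⟩ : C), rfl⟩
  have hcard1 : Nat.card {w : G // ∃ c ∈ C, w = c * x' * c⁻¹} = Nat.card (C ⧸ K') :=
    (Nat.card_eq_of_bijective f hfbij).symm
  have hcard2 : Nat.card (C ⧸ K') = (Subgroup.centralizer {x'}).relIndex C := by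
    rw [Subgroup.relIndex, hK', Subgroup.index_eq_card]
  constructor
  · rw [Nat.card_congr e1, hcard1, hcard2]
  · rw [Nat.card_congr e1]
end

section
/- Let G be a finite group and g a p-element of G. Then P_p(g,G) ≤ 2^{-ω}, where ω is the number of abelian chief factors X/Y in a chief series of G whose order is coprime to p and which are not centralized by g. -/
open Subgroup Pointwise

open scoped commutatorElement

section Helpers
variable {G : Type*} [Group G] [Finite G] {p : ℕ} [Fact p.Prime]

lemma my_eq_of_le_of_card_le {H K : Subgroup G} (h : H ≤ K)
    (hc : Nat.card K ≤ Nat.card H) : H = K := by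
  apply SetLike.coe_injective
  apply Set.eq_of_subset_of_ncard_le h
  rwa [← Nat.card_coe_set_eq, ← Nat.card_coe_set_eq]

lemma pgroup_inf_coprime_eq_bot (K N : Subgroup G) (hK : IsPGroup p K)
    (hN : (Nat.card N).Coprime p) : K ⊓ N = ⊥ := by
  obtain ⟨k, hk⟩ := hK.exists_card_eq
  rw [← Subgroup.card_eq_one]
  have h1 : Nat.card ↥(K ⊓ N) ∣ p ^ k := hk ▸ card_dvd_of_le inf_le_left
  have h2 : Nat.card ↥(K ⊓ N) ∣ Nat.card N := card_dvd_of_le inf_le_right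
  have h3 : Nat.Coprime (Nat.card N) (p ^ k) := hN.pow_right k
  exact Nat.dvd_one.mp (h3 ▸ Nat.dvd_gcd h2 h1)

lemma exists_conj_of_complement (N A B : Subgroup G) [N.Normal]
    (hN : (Nat.card N).Coprime p) (hA : IsPGroup p A) (hB : IsPGroup p B)
    (hAtop : A ⊔ N = ⊤) (hBtop : B ⊔ N = ⊤) :
    ∃ m ∈ N, ∀ x : G, x ∈ B ↔ m * x * m⁻¹ ∈ A := by
  have hcard : ∀ C : Subgroup G, IsPGroup p C → C ⊔ N = ⊤ →
      Nat.card N * Nat.card C = Nat.card G := by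
    intro C hC htop'
    have hd : Disjoint N C := disjoint_iff.mpr
      (by rw [inf_comm]; exact pgroup_inf_coprime_eq_bot C N hC hN)
    have hmul : ((N : Set G) * (C : Set G)) = Set.univ := by
      rw [← normal_mul, sup_comm, htop', Subgroup.coe_top]
    exact (isComplement'_of_disjoint_and_mul_eq_univ hd hmul).card_mul
  have key : ∀ C : Subgroup G, IsPGroup p C → C ⊔ N = ⊤ →
      ∀ S : Sylow p G, C ≤ S → C = ↑S := by
    intro C hC htop' S hle
    have h1 := hcard C hC htop'
    have h2 := hcard S S.2 (top_unique (htop' ▸ sup_le_sup_right hle N))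
    exact my_eq_of_le_of_card_le hle
      (le_of_eq (Nat.eq_of_mul_eq_mul_left Nat.card_pos (h2.trans h1.symm)))
  obtain ⟨SA, hSA⟩ := hA.exists_le_sylow
  obtain ⟨SB, hSB⟩ := hB.exists_le_sylow
  have hA' : A = ↑SA := key A hA hAtop SA hSA
  have hB' : B = ↑SB := key B hB hBtop SB hSB
  obtain ⟨h, hh⟩ := MulAction.exists_smul_eq G SB SA
  have hmem : ∀ x : G, x ∈ B ↔ h * x * h⁻¹ ∈ A := by
    intro x
    rw [hA', hB']
    have : (↑(h • SB) : Subgroup G) = MulAut.conj h • (SB : Subgroup G) :=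
      Sylow.coe_subgroup_smul
    rw [← hh, this]
    constructor
    · intro hx
      have := Subgroup.smul_mem_pointwise_smul x (MulAut.conj h) (SB : Subgroup G) hx
      simpa [MulAut.conj_apply, mul_assoc] using this
    · intro hx
      have := Subgroup.smul_mem_pointwise_smul _ (MulAut.conj h)⁻¹ _ hx
      simpa [MulAut.conj_apply, mul_assoc] using this
  have hhm : h ∈ ((A : Set G) * (N : Set G)) := by
    rw [← Subgroup.mul_normal A N]
    exact hAtop ▸ Subgroup.mem_top h
  obtain ⟨a, ha, m, hm, rfl⟩ := hhm
  refine ⟨m, hm, fun x => ?_⟩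
  rw [hmem x]
  have h1 : (a * m) * x * (a * m)⁻¹ = a * (m * x * m⁻¹) * a⁻¹ := by group
  rw [h1]
  constructor
  · intro hx
    have := mul_mem (mul_mem (inv_mem ha) hx) ha
    simpa [mul_assoc] using this
  · intro hx
    exact mul_mem (mul_mem ha hx) (inv_mem ha)

end Helpers

section B
variable {G : Type*} [Group G] [Finite G] {p : ℕ} [Fact p.Prime]

lemma exists_conj_of_complement' (N A B : Subgroup G) [hNn : N.Normal]
    (hN : (Nat.card N).Coprime p) (hA : IsPGroup p A) (hB : IsPGroup p B)
    (hBA : B ⊔ N = A ⊔ N) :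
    ∃ m ∈ N, ∀ x : G, x ∈ B ↔ m * x * m⁻¹ ∈ A := by
  set K : Subgroup G := A ⊔ N with hK
  have hAK : A ≤ K := le_sup_left
  have hNK : N ≤ K := le_sup_right
  have hBK : B ≤ K := le_sup_left.trans_eq hBA
  set N' : Subgroup K := N.subgroupOf K with hN'
  set A' : Subgroup K := A.subgroupOf K with hA'
  set B' : Subgroup K := B.subgroupOf K with hB'
  haveI : N'.Normal := hNn.subgroupOf K
  have hcard : Nat.card N' = Nat.card N :=
    Nat.card_congr (Subgroup.subgroupOfEquivOfLe hNK).toEquiv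
  have hsup : ∀ C : Subgroup G, C ≤ K → C ⊔ N = K → C.subgroupOf K ⊔ N' = ⊤ := by
    intro C hCK hCN
    apply Subgroup.map_injective K.subtype_injective
    rw [Subgroup.map_sup, Subgroup.subgroupOf_map_subtype, Subgroup.subgroupOf_map_subtype]
    rw [inf_eq_left.mpr hCK, inf_eq_left.mpr hNK]
    rw [← MonoidHom.range_eq_map, Subgroup.range_subtype]
    exact hCN
  have hApg : IsPGroup p A' := hA.of_equiv (Subgroup.subgroupOfEquivOfLe hAK).symm
  have hBpg : IsPGroup p B' := hB.of_equiv (Subgroup.subgroupOfEquivOfLe hBK).symm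
  obtain ⟨m', hm'N, hiff⟩ := exists_conj_of_complement N' A' B' (hcard ▸ hN) hApg hBpg
    (hsup A hAK rfl) (hsup B hBK hBA)
  refine ⟨(m' : G), hm'N, fun x => ?_⟩
  by_cases hx : x ∈ K
  · have h1 : x ∈ B ↔ (⟨x, hx⟩ : K) ∈ B' := Iff.rfl
    have h2 := hiff ⟨x, hx⟩
    rw [h1, h2]
    exact Iff.rfl
  · constructor
    · intro h; exact absurd (hBK h) hx
    · intro h
      exfalso
      apply hx
      have : (m' : G)⁻¹ * ((m' : G) * x * (m' : G)⁻¹) * (m' : G) = x := by group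
      rw [← this]
      exact mul_mem (mul_mem (inv_mem m'.2) (hAK h)) m'.2

lemma card_le_of_fiber_le {α β : Type*} [Finite α] [Finite β] (f : α → β) (k : ℕ)
    (h : ∀ b : β, Nat.card {a : α // f a = b} ≤ k) : Nat.card α ≤ Nat.card β * k := by
  cases nonempty_fintype α
  cases nonempty_fintype β
  classical
  rw [Nat.card_eq_fintype_card, Nat.card_eq_fintype_card]
  rw [Fintype.card_congr (Equiv.sigmaFiberEquiv f).symm, Fintype.card_sigma]
  calc ∑ b : β, Fintype.card {a : α // f a = b}
      ≤ ∑ _b : β, k := Finset.sum_le_sum fun b _ => by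
        rw [← Nat.card_eq_fintype_card]; exact h b
    _ = Fintype.card β * k := by rw [Finset.sum_const, Finset.card_univ, smul_eq_mul]
lemma himg (g : G) (N : Subgroup G) [N.Normal] (x : G) :
    Subgroup.map (QuotientGroup.mk' N) (Subgroup.closure {g, x}) =
      Subgroup.closure {(QuotientGroup.mk g : G ⧸ N), QuotientGroup.mk x} := by
  rw [MonoidHom.map_closure, Set.image_pair]
  rfl

lemma stepB (g : G) (N : Subgroup G) [N.Normal] :
    Nat.card {x : G // IsPGroup p (Subgroup.closure {g, x})} ≤
      Nat.card {x : G ⧸ N //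
        IsPGroup p (Subgroup.closure {(QuotientGroup.mk g : G ⧸ N), x})} * Nat.card N := by
  set f : {x : G // IsPGroup p (Subgroup.closure {g, x})} →
      {x : G ⧸ N // IsPGroup p (Subgroup.closure {(QuotientGroup.mk g : G ⧸ N), x})} :=
    fun a => ⟨QuotientGroup.mk a.1, himg g N a.1 ▸ a.2.map (QuotientGroup.mk' N)⟩ with hf
  apply card_le_of_fiber_le f
  intro b
  rcases isEmpty_or_nonempty {a // f a = b} with he | hne
  · simp [Nat.card_of_isEmpty]
  · obtain ⟨a₀⟩ := hne
    have hmk : ∀ a : {a // f a = b}, QuotientGroup.mk a.1.1 = (b.1 : G ⧸ N) := by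
      intro a; exact congrArg Subtype.val a.2
    refine Nat.card_le_card_of_injective
      (fun a => (⟨a₀.1.1⁻¹ * a.1.1, by
        rw [← QuotientGroup.eq]
        rw [hmk a₀, hmk a]⟩ : N)) ?_
    intro a a' hx
    have := congrArg Subtype.val hx
    simp only at this
    exact Subtype.ext (Subtype.ext (mul_left_cancel this))

lemma stepA (g : G) (N : Subgroup G) [hNn : N.Normal] (hN : (Nat.card N).Coprime p)
    (hnc : ¬ ∀ x ∈ N, ⁅g, x⁆ = 1) :
    2 * Nat.card {x : G // IsPGroup p (Subgroup.closure {g, x})} ≤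
      Nat.card {x : G ⧸ N //
        IsPGroup p (Subgroup.closure {(QuotientGroup.mk g : G ⧸ N), x})} * Nat.card N := by
  set C : Subgroup G := Subgroup.centralizer {g} ⊓ N with hC
  set f : {x : G // IsPGroup p (Subgroup.closure {g, x})} →
      {x : G ⧸ N // IsPGroup p (Subgroup.closure {(QuotientGroup.mk g : G ⧸ N), x})} :=
    fun a => ⟨QuotientGroup.mk a.1, himg g N a.1 ▸ a.2.map (QuotientGroup.mk' N)⟩ with hf
  have main : Nat.card {x : G // IsPGroup p (Subgroup.closure {g, x})} ≤
      Nat.card {x : G ⧸ N //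
        IsPGroup p (Subgroup.closure {(QuotientGroup.mk g : G ⧸ N), x})} * Nat.card C := by
    apply card_le_of_fiber_le f
    intro b
    rcases isEmpty_or_nonempty {a // f a = b} with he | hne
    · simp [Nat.card_of_isEmpty]
    · obtain ⟨a₀⟩ := hne
      have hmk : ∀ a : {a // f a = b}, QuotientGroup.mk a.1.1 = (b.1 : G ⧸ N) := by
        intro a; exact congrArg Subtype.val a.2
      have hsup : ∀ a : {a // f a = b},
          Subgroup.closure {g, a.1.1} ⊔ N = Subgroup.closure {g, a₀.1.1} ⊔ N := by
        intro a
        have h1 : ∀ a : {a // f a = b}, Subgroup.closure {g, a.1.1} ⊔ N =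
            Subgroup.comap (QuotientGroup.mk' N)
              (Subgroup.closure {(QuotientGroup.mk g : G ⧸ N), (b.1 : G ⧸ N)}) := by
          intro a
          rw [show ((b.1 : G ⧸ N)) = QuotientGroup.mk a.1.1 from (hmk a).symm,
            ← himg g N a.1.1, Subgroup.comap_map_eq, QuotientGroup.ker_mk']
        rw [h1 a, h1 a₀]
      have key : ∀ a : {a // f a = b}, ∃ m : G, m ∈ C ∧
          (∀ x : G, x ∈ Subgroup.closure {g, a.1.1} ↔
            m * x * m⁻¹ ∈ Subgroup.closure {g, a₀.1.1}) := by
        intro a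
        obtain ⟨m, hmN, hiff⟩ := exists_conj_of_complement' N
          (Subgroup.closure {g, a₀.1.1}) (Subgroup.closure {g, a.1.1})
          hN a₀.1.2 a.1.2 (hsup a)
        have hgB : g ∈ Subgroup.closure {g, a.1.1} :=
          Subgroup.subset_closure (Set.mem_insert g _)
        have hgA : g ∈ Subgroup.closure {g, a₀.1.1} :=
          Subgroup.subset_closure (Set.mem_insert g _)
        have hcN : m * g * m⁻¹ * g⁻¹ ∈ N := by
          have h2 : m * g * m⁻¹ * g⁻¹ = m * (g * m⁻¹ * g⁻¹) := by group
          rw [h2]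
          exact mul_mem hmN (hNn.conj_mem m⁻¹ (inv_mem hmN) g)
        have hcA : m * g * m⁻¹ * g⁻¹ ∈ Subgroup.closure {g, a₀.1.1} :=
          mul_mem ((hiff g).mp hgB) (inv_mem hgA)
        have hcbot : m * g * m⁻¹ * g⁻¹ ∈
            (Subgroup.closure {g, a₀.1.1} ⊓ N : Subgroup G) := ⟨hcA, hcN⟩
        rw [pgroup_inf_coprime_eq_bot _ N a₀.1.2 hN, Subgroup.mem_bot] at hcbot
        have h4 : m * g * m⁻¹ = g := mul_inv_eq_one.mp hcbot
        have hcomm : g * m = m * g := by nth_rewrite 1 [← h4]; group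
        exact ⟨m, ⟨Subgroup.mem_centralizer_iff.mpr
          (fun h hh => by rw [Set.mem_singleton_iff] at hh; rw [hh]; exact hcomm), hmN⟩, hiff⟩
      choose F hFC hFiff using key
      refine Nat.card_le_card_of_injective (fun a => (⟨F a, hFC a⟩ : C)) ?_
      intro a a' hx
      have hFeq : F a = F a' := congrArg Subtype.val hx
      have hcl : Subgroup.closure {g, a.1.1} = Subgroup.closure {g, a'.1.1} := by
        ext x
        rw [hFiff a x, hFeq, ← hFiff a' x]
      have hy : a.1.1 ∈ Subgroup.closure {g, a.1.1} :=
        Subgroup.subset_closure (Set.mem_insert_iff.mpr (Or.inr rfl))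
      have hy' : a'.1.1 ∈ Subgroup.closure {g, a.1.1} := by
        rw [hcl]; exact Subgroup.subset_closure (Set.mem_insert_iff.mpr (Or.inr rfl))
      have hmem : a.1.1⁻¹ * a'.1.1 ∈
          (Subgroup.closure {g, a.1.1} ⊓ N : Subgroup G) := by
        rw [Subgroup.mem_inf]
        refine ⟨mul_mem (inv_mem hy) hy', ?_⟩
        rw [← QuotientGroup.eq, hmk a, hmk a']
      rw [pgroup_inf_coprime_eq_bot _ N a.1.2 hN, Subgroup.mem_bot] at hmem
      exact Subtype.ext (Subtype.ext (inv_mul_eq_one.mp hmem))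
  -- now 2 * card C ≤ card N
  have hCN : C ≤ N := inf_le_right
  obtain ⟨t, ht⟩ := card_dvd_of_le hCN
  have hne : C ≠ N := by
    intro h
    apply hnc
    intro x hx
    have hxC : x ∈ C := h ▸ hx
    have := Subgroup.mem_centralizer_iff.mp hxC.1 g (Set.mem_singleton g)
    rw [commutatorElement_eq_one_iff_mul_comm]
    exact this
  have ht0 : t ≠ 0 := by
    rintro rfl
    rw [mul_zero] at ht
    exact Nat.card_pos.ne' ht
  have ht1 : t ≠ 1 := by
    rintro rfl
    rw [mul_one] at ht
    exact hne (my_eq_of_le_of_card_le hCN ht.le)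
  have ht2 : 2 ≤ t := by omega
  calc 2 * Nat.card {x : G // IsPGroup p (Subgroup.closure {g, x})}
      ≤ 2 * (Nat.card {x : G ⧸ N //
          IsPGroup p (Subgroup.closure {(QuotientGroup.mk g : G ⧸ N), x})} *
          Nat.card C) := Nat.mul_le_mul_left 2 main
    _ = Nat.card {x : G ⧸ N //
          IsPGroup p (Subgroup.closure {(QuotientGroup.mk g : G ⧸ N), x})} *
          (2 * Nat.card C) := by ring
    _ ≤ Nat.card {x : G ⧸ N //
          IsPGroup p (Subgroup.closure {(QuotientGroup.mk g : G ⧸ N), x})} *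
          Nat.card N := by
        apply Nat.mul_le_mul_left
        rw [ht, mul_comm (Nat.card C) t]
        exact Nat.mul_le_mul_right _ ht2

lemma mem_map_quot_iff (N B : Subgroup G) [N.Normal] (hNB : N ≤ B) (x : G) :
    (QuotientGroup.mk' N) x ∈ B.map (QuotientGroup.mk' N) ↔ x ∈ B := by
  constructor
  · intro hx
    have h2 : x ∈ Subgroup.comap (QuotientGroup.mk' N) (B.map (QuotientGroup.mk' N)) := hx
    rwa [Subgroup.comap_map_eq, QuotientGroup.ker_mk', sup_eq_left.mpr hNB] at h2
  · exact fun hx => Subgroup.mem_map_of_mem _ hx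

lemma abelian_transfer (N A B : Subgroup G) [N.Normal] (hNB : N ≤ B) :
    (∀ x ∈ A.map (QuotientGroup.mk' N), ∀ y ∈ A.map (QuotientGroup.mk' N),
      ⁅x, y⁆ ∈ B.map (QuotientGroup.mk' N)) ↔ (∀ x ∈ A, ∀ y ∈ A, ⁅x, y⁆ ∈ B) := by
  constructor
  · intro h x hx y hy
    have h2 := h _ (Subgroup.mem_map_of_mem _ hx) _ (Subgroup.mem_map_of_mem _ hy)
    rw [← map_commutatorElement] at h2
    exact (mem_map_quot_iff N B hNB _).mp h2
  · intro h x hx y hy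
    rcases Subgroup.mem_map.mp hx with ⟨x', hx', rfl⟩
    rcases Subgroup.mem_map.mp hy with ⟨y', hy', rfl⟩
    rw [← map_commutatorElement]
    exact Subgroup.mem_map_of_mem _ (h _ hx' _ hy')

lemma central_transfer (N A B : Subgroup G) [N.Normal] (hNB : N ≤ B) (g : G) :
    (∀ x ∈ A.map (QuotientGroup.mk' N),
      ⁅(QuotientGroup.mk g : G ⧸ N), x⁆ ∈ B.map (QuotientGroup.mk' N)) ↔
      (∀ x ∈ A, ⁅g, x⁆ ∈ B) := by
  have hgg : (QuotientGroup.mk g : G ⧸ N) = (QuotientGroup.mk' N) g := rfl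
  constructor
  · intro h x hx
    have h2 := h _ (Subgroup.mem_map_of_mem _ hx)
    rw [hgg, ← map_commutatorElement] at h2
    exact (mem_map_quot_iff N B hNB _).mp h2
  · intro h x hx
    rcases Subgroup.mem_map.mp hx with ⟨x', hx', rfl⟩
    rw [hgg, ← map_commutatorElement]
    exact Subgroup.mem_map_of_mem _ (h _ hx')

lemma relindex_transfer (N A B : Subgroup G) [N.Normal] (hNB : N ≤ B) :
    (B.map (QuotientGroup.mk' N)).relIndex (A.map (QuotientGroup.mk' N)) = B.relIndex A := by
  have h := Subgroup.relIndex_comap (H := B.map (QuotientGroup.mk' N))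
    (QuotientGroup.mk' N) A
  rw [Subgroup.comap_map_eq, QuotientGroup.ker_mk', sup_eq_left.mpr hNB] at h
  exact h.symm

open Classical in
lemma card_subtype_fin_succ {n : ℕ} (P : Fin (n + 1) → Prop) :
    Nat.card {i : Fin (n + 1) // P i} =
      (if P 0 then 1 else 0) + Nat.card {j : Fin n // P j.succ} := by
  classical
  rw [Nat.card_eq_fintype_card, Nat.card_eq_fintype_card, Fintype.card_subtype,
    Fintype.card_subtype, Finset.card_filter, Finset.card_filter, Fin.sum_univ_succ]

end B

theorem stmt9_aux (p : ℕ) [Fact p.Prime] : ∀ (n : ℕ) {G : Type u} [Group G] [Finite G] (g : G)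
    (σ : Fin (n + 1) → Subgroup G), Monotone σ → σ 0 = ⊥ → (∀ i, (σ i).Normal) →
    Nat.card {x : G // IsPGroup p (Subgroup.closure {g, x})} *
      2 ^ (Nat.card {i : Fin n //
        (∀ x ∈ σ i.succ, ∀ y ∈ σ i.succ, ⁅x, y⁆ ∈ σ i.castSucc) ∧
        Nat.Coprime ((σ i.castSucc).relIndex (σ i.succ)) p ∧
        ¬ ∀ x ∈ σ i.succ, ⁅g, x⁆ ∈ σ i.castSucc}) ≤ Nat.card G := by
  intro n
  induction n with
  | zero =>
    intro G _ _ g σ hmono h0 hnorm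
    haveI : IsEmpty {i : Fin 0 //
        (∀ x ∈ σ i.succ, ∀ y ∈ σ i.succ, ⁅x, y⁆ ∈ σ i.castSucc) ∧
        Nat.Coprime ((σ i.castSucc).relIndex (σ i.succ)) p ∧
        ¬ ∀ x ∈ σ i.succ, ⁅g, x⁆ ∈ σ i.castSucc} := ⟨fun a => a.1.elim0⟩
    have h1 : Nat.card {i : Fin 0 //
        (∀ x ∈ σ i.succ, ∀ y ∈ σ i.succ, ⁅x, y⁆ ∈ σ i.castSucc) ∧
        Nat.Coprime ((σ i.castSucc).relIndex (σ i.succ)) p ∧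
        ¬ ∀ x ∈ σ i.succ, ⁅g, x⁆ ∈ σ i.castSucc} = 0 := Nat.card_of_isEmpty
    rw [h1, pow_zero, mul_one]
    exact Nat.card_le_card_of_injective Subtype.val Subtype.val_injective
  | succ n ih =>
    intro G _ _ g σ hmono h0 hnorm
    classical
    set N : Subgroup G := σ 1 with hN
    haveI : N.Normal := hnorm 1
    set σ' : Fin (n + 1) → Subgroup (G ⧸ N) :=
      fun j => (σ j.succ).map (QuotientGroup.mk' N) with hσ'
    have hmono' : Monotone σ' := fun j k hjk =>
      Subgroup.map_mono (hmono (Fin.succ_le_succ_iff.mpr hjk))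
    have h0' : σ' 0 = ⊥ := by
      rw [hσ']
      simp only [Fin.succ_zero_eq_one]
      rw [Subgroup.map_eq_bot_iff, QuotientGroup.ker_mk']
    have hnorm' : ∀ j, (σ' j).Normal := fun j =>
      Subgroup.Normal.map (hnorm _) _ (QuotientGroup.mk'_surjective N)
    have IH := ih (QuotientGroup.mk g : G ⧸ N) σ' hmono' h0' hnorm'
    set P : Fin (n + 1) → Prop := fun i =>
      (∀ x ∈ σ i.succ, ∀ y ∈ σ i.succ, ⁅x, y⁆ ∈ σ i.castSucc) ∧
        Nat.Coprime ((σ i.castSucc).relIndex (σ i.succ)) p ∧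
        ¬ ∀ x ∈ σ i.succ, ⁅g, x⁆ ∈ σ i.castSucc with hP
    set P' : Fin n → Prop := fun j =>
      (∀ x ∈ σ' j.succ, ∀ y ∈ σ' j.succ, ⁅x, y⁆ ∈ σ' j.castSucc) ∧
        Nat.Coprime ((σ' j.castSucc).relIndex (σ' j.succ)) p ∧
        ¬ ∀ x ∈ σ' j.succ, ⁅(QuotientGroup.mk g : G ⧸ N), x⁆ ∈ σ' j.castSucc with hP'
    have hNle : ∀ j : Fin n, N ≤ σ (j.succ).castSucc := by
      intro j
      apply hmono
      rw [Fin.le_def]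
      simp [Fin.lt_iff_val_lt_val]
    have hPP : ∀ j : Fin n, P' j ↔ P j.succ := by
      intro j
      have e1 : (j.castSucc).succ = (j.succ).castSucc := Fin.succ_castSucc j
      rw [hP', hP]
      simp only [hσ', e1]
      exact and_congr (abelian_transfer N _ _ (hNle j))
        (and_congr (by rw [relindex_transfer N _ _ (hNle j)])
          (not_congr (central_transfer N _ _ (hNle j) g)))
    have hsplit := card_subtype_fin_succ P
    have hsplit2 : Nat.card {j : Fin n // P j.succ} = Nat.card {j : Fin n // P' j} :=
      Nat.card_congr (Equiv.subtypeEquivRight fun j => (hPP j).symm)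
    rw [hsplit2] at hsplit
    have hGQ : Nat.card G = Nat.card (G ⧸ N) * Nat.card N :=
      Subgroup.card_eq_card_quotient_mul_card_subgroup N
    show Nat.card {x : G // IsPGroup p (Subgroup.closure {g, x})} *
        2 ^ (Nat.card {i : Fin (n + 1) // P i}) ≤ Nat.card G
    rw [hsplit]
    by_cases hP0 : P 0
    · obtain ⟨hab, hcop, hnc⟩ := hP0
      rw [Fin.castSucc_zero, h0] at hcop hnc
      rw [Fin.succ_zero_eq_one] at hcop hnc
      rw [Subgroup.relIndex_bot_left] at hcop
      have hnc' : ¬ ∀ x ∈ N, ⁅g, x⁆ = 1 := by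
        intro hc
        exact hnc fun x hx => by rw [Subgroup.mem_bot]; exact hc x hx
      have hA := stepA g N hcop hnc'
      rw [if_pos ⟨hab, by rw [Fin.castSucc_zero, h0, Fin.succ_zero_eq_one,
        Subgroup.relIndex_bot_left]; exact hcop, by
          rw [Fin.castSucc_zero, h0, Fin.succ_zero_eq_one]; exact hnc⟩]
      calc Nat.card {x : G // IsPGroup p (Subgroup.closure {g, x})} *
            2 ^ (1 + Nat.card {j : Fin n // P' j})
          = (2 * Nat.card {x : G // IsPGroup p (Subgroup.closure {g, x})}) *
            2 ^ (Nat.card {j : Fin n // P' j}) := by ring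
        _ ≤ (Nat.card {x : G ⧸ N //
              IsPGroup p (Subgroup.closure {(QuotientGroup.mk g : G ⧸ N), x})} * Nat.card N) *
            2 ^ (Nat.card {j : Fin n // P' j}) :=
            Nat.mul_le_mul_right _ hA
        _ = (Nat.card {x : G ⧸ N //
              IsPGroup p (Subgroup.closure {(QuotientGroup.mk g : G ⧸ N), x})} *
            2 ^ (Nat.card {j : Fin n // P' j})) * Nat.card N := by ring
        _ ≤ Nat.card (G ⧸ N) * Nat.card N := Nat.mul_le_mul_right _ IH
        _ = Nat.card G := hGQ.symm
    · rw [@if_neg (P 0) (Classical.propDecidable (P 0)) hP0 ℕ 1 0, zero_add]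
      have hB := stepB (p := p) g N
      calc Nat.card {x : G // IsPGroup p (Subgroup.closure {g, x})} *
            2 ^ (Nat.card {j : Fin n // P' j})
          ≤ (Nat.card {x : G ⧸ N //
              IsPGroup p (Subgroup.closure {(QuotientGroup.mk g : G ⧸ N), x})} * Nat.card N) *
            2 ^ (Nat.card {j : Fin n // P' j}) := Nat.mul_le_mul_right _ hB
        _ = (Nat.card {x : G ⧸ N //
              IsPGroup p (Subgroup.closure {(QuotientGroup.mk g : G ⧸ N), x})} *
            2 ^ (Nat.card {j : Fin n // P' j})) * Nat.card N := by ring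
        _ ≤ Nat.card (G ⧸ N) * Nat.card N := Nat.mul_le_mul_right _ IH
        _ = Nat.card G := hGQ.symm


/-- Let `G` be a finite group and `g` a `p`-element. If `ω` is the number
of abelian factors of a chief series of `G` whose order is coprime with `p` and which
are not centralized by `g`, then `P_p(g,G) ≤ 2 ^ (-ω)`. -/
theorem stmt9 {G : Type*} [Group G] [Finite G] (p : ℕ) [Fact p.Prime]
    (g : G) (hg : ∃ k : ℕ, orderOf g = p ^ k)
    -- a chief series `⊥ = σ 0 ≤ σ 1 ≤ ⋯ ≤ σ n = ⊤`
    (n : ℕ) (σ : Fin (n + 1) → Subgroup G) (hmono : Monotone σ)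
    (h0 : σ 0 = ⊥) (htop : σ (Fin.last n) = ⊤)
    (hnorm : ∀ i, (σ i).Normal)
    (hchief : ∀ i : Fin n, σ i.castSucc ≠ σ i.succ ∧
      ∀ K : Subgroup G, K.Normal → σ i.castSucc ≤ K → K ≤ σ i.succ →
        K = σ i.castSucc ∨ K = σ i.succ)
    (ω : ℕ)
    (hω : ω = Nat.card {i : Fin n //
      -- the factor `σ i.succ / σ i.castSucc` is abelian,
      (∀ x ∈ σ i.succ, ∀ y ∈ σ i.succ, ⁅x, y⁆ ∈ σ i.castSucc) ∧
      -- of order coprime to `p`,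
      Nat.Coprime ((σ i.castSucc).relIndex (σ i.succ)) p ∧
      -- and not centralized by `g`
      ¬ ∀ x ∈ σ i.succ, ⁅g, x⁆ ∈ σ i.castSucc}) :
    (Nat.card {x : G // IsPGroup p (Subgroup.closure {g, x})} : ℝ) / Nat.card G ≤
      (1 / 2 : ℝ) ^ ω := by
  have key := stmt9_aux p n g σ hmono h0 hnorm
  rw [hω]
  have hGpos : (0 : ℝ) < Nat.card G := by exact_mod_cast Nat.card_pos
  rw [div_le_iff₀ hGpos]
  rw [show ((1 : ℝ) / 2) ^ (Nat.card {i : Fin n //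
      (∀ x ∈ σ i.succ, ∀ y ∈ σ i.succ, ⁅x, y⁆ ∈ σ i.castSucc) ∧
      Nat.Coprime ((σ i.castSucc).relIndex (σ i.succ)) p ∧
      ¬ ∀ x ∈ σ i.succ, ⁅g, x⁆ ∈ σ i.castSucc}) * (Nat.card G : ℝ) =
      (Nat.card G : ℝ) / 2 ^ (Nat.card {i : Fin n //
      (∀ x ∈ σ i.succ, ∀ y ∈ σ i.succ, ⁅x, y⁆ ∈ σ i.castSucc) ∧
      Nat.Coprime ((σ i.castSucc).relIndex (σ i.succ)) p ∧
      ¬ ∀ x ∈ σ i.succ, ⁅g, x⁆ ∈ σ i.castSucc}) from by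
    rw [div_pow, one_pow]; ring]
  rw [le_div_iff₀ (by positivity)]
  exact_mod_cast key
end

section
/- Let G be a finite solvable group and p a prime. A p-element g of G centralizes all chief factors of G of order coprime to p if and only if g ∈ O_p(G), the largest normal p-subgroup of G. -/
/-- The `p`-core `O_p(G)`: the largest normal `p`-subgroup of `G`
(defined as the join of all normal `p`-subgroups). -/
def pCore (p : ℕ) (G : Type*) [Group G] : Subgroup G :=
  ⨆ (H : Subgroup G) (_ : H.Normal) (_ : IsPGroup p H), H

open scoped commutatorElement

open Subgroup

section Aux

variable {G : Type*} [Group G] {p : ℕ}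

lemma le_pCore {H : Subgroup G} (h1 : H.Normal) (h2 : IsPGroup p H) : H ≤ pCore p G :=
  le_iSup_of_le H <| le_iSup_of_le h1 <| le_iSup_of_le h2 le_rfl

lemma mem_pCore_exists {g : G} (hg : g ∈ pCore p G) :
    ∃ H : Subgroup G, H.Normal ∧ IsPGroup p H ∧ g ∈ H := by
  refine Subgroup.iSup_induction _ hg (C := fun x => ∃ H : Subgroup G,
    H.Normal ∧ IsPGroup p H ∧ x ∈ H) ?_ ⟨⊥, inferInstance, IsPGroup.of_bot, mem_bot.2 rfl⟩ ?_
  · intro H x hx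
    by_cases h1 : H.Normal
    · by_cases h2 : IsPGroup p H
      · rw [iSup_pos h1, iSup_pos h2] at hx
        exact ⟨H, h1, h2, hx⟩
      · rw [iSup_pos h1, iSup_neg h2] at hx
        exact ⟨⊥, inferInstance, IsPGroup.of_bot, hx⟩
    · rw [iSup_neg h1] at hx
      exact ⟨⊥, inferInstance, IsPGroup.of_bot, hx⟩
  · rintro x y ⟨H, hH1, hH2, hxH⟩ ⟨K, hK1, hK2, hyK⟩
    haveI := hH1; haveI := hK1
    exact ⟨H ⊔ K, inferInstance, hH2.to_sup_of_normal_right hK2,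
      mul_mem (le_sup_left (a := H) (b := K) hxH) (le_sup_right (a := H) (b := K) hyK)⟩

lemma pCore_isPGroup [Fact p.Prime] : IsPGroup p (pCore p G) := by
  rw [IsPGroup.iff_orderOf]
  rintro ⟨g, hg⟩
  obtain ⟨H, h1, h2, hgH⟩ := mem_pCore_exists hg
  obtain ⟨k, hk⟩ := (IsPGroup.iff_orderOf.1 h2) ⟨g, hgH⟩
  exact ⟨k, by rwa [Subgroup.orderOf_mk] at hk ⊢⟩

lemma pCore_normal : (pCore p G).Normal := by
  constructor
  intro n hn γ
  have key : pCore p G ≤ comap (MulAut.conj γ).toMonoidHom (pCore p G) := by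
    refine iSup_le fun H => iSup_le fun hN => iSup_le fun hP => ?_
    rw [← map_le_iff_le_comap]
    exact le_pCore (hN.map _ (MulEquiv.surjective _)) (hP.map _)
  exact key hn

end Aux

lemma backward_aux {G : Type*} [Group G] [Finite G] {p : ℕ} [Fact p.Prime] {g : G}
    (hg : g ∈ pCore p G) {X Y : Subgroup G} (hX : X.Normal) (hY : Y.Normal) (hYX : Y ≤ X)
    (hcop : Nat.Coprime (Y.relIndex X) p) {x : G} (hx : x ∈ X) : ⁅g, x⁆ ∈ Y := by
  have hcX : ⁅g, x⁆ ∈ X := by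
    rw [commutatorElement_def]
    exact mul_mem (hX.conj_mem x hx g) (inv_mem hx)
  have hcP : ⁅g, x⁆ ∈ pCore p G := by
    have h2 : x * g⁻¹ * x⁻¹ ∈ pCore p G := pCore_normal.conj_mem g⁻¹ (inv_mem hg) x
    have : ⁅g, x⁆ = g * (x * g⁻¹ * x⁻¹) := by group
    rw [this]
    exact mul_mem hg h2
  obtain ⟨k, hk⟩ := pCore_isPGroup (G := G) (p := p) ⟨⁅g, x⁆, hcP⟩
  have hck : ⁅g, x⁆ ^ p ^ k = 1 := by
    simpa [Subtype.ext_iff] using hk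
  haveI := hY.subgroupOf X
  set c : X := ⟨⁅g, x⁆, hcX⟩ with hc
  set q : X ⧸ Y.subgroupOf X := QuotientGroup.mk' (Y.subgroupOf X) c with hq
  have hq1 : q ^ p ^ k = 1 := by
    rw [hq, ← map_pow]
    have : c ^ p ^ k = 1 := by
      ext
      simpa using hck
    rw [this, map_one]
  have hd1 : orderOf q ∣ p ^ k := orderOf_dvd_of_pow_eq_one hq1
  have hd2 : orderOf q ∣ Y.relIndex X := by
    have := orderOf_dvd_natCard q
    rwa [← Subgroup.index_eq_card, ← Subgroup.relIndex] at this
  have hco : Nat.Coprime (orderOf q) (p ^ k) :=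
    (Nat.Coprime.coprime_dvd_left hd2 hcop).pow_right k
  have hone : orderOf q = 1 := by
    have := Nat.gcd_eq_left hd1
    rw [hco] at this
    exact this.symm
  have : q = 1 := orderOf_eq_one_iff.mp hone
  rw [hq] at this
  have hmem : c ∈ Y.subgroupOf X := (QuotientGroup.eq_one_iff c).mp this
  exact hmem

/-- The hypothesis: `g` centralizes all chief factors of `G` of order coprime to `p`. -/
def CentChief (p : ℕ) {G : Type*} [Group G] (g : G) : Prop :=
  ∀ X Y : Subgroup G, X.Normal → Y.Normal → Y ≤ X → Y ≠ X →
    (∀ K : Subgroup G, K.Normal → Y ≤ K → K ≤ X → K = Y ∨ K = X) →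
    Nat.Coprime (Y.relIndex X) p → ∀ x ∈ X, ⁅g, x⁆ ∈ Y

universe u

lemma forward_aux : ∀ (n : ℕ) (G : Type u) [Group G] [Finite G] [Group.IsSolvable G]
    (p : ℕ) [Fact p.Prime] (g : G), Nat.card G ≤ n → (∃ k, orderOf g = p ^ k) →
    CentChief p g → g ∈ pCore p G := by
  intro n
  induction n with
  | zero =>
    intro G _ _ _ p _ g hcard _ _
    exact absurd hcard (by have := Nat.card_pos (α := G); omega)
  | succ n ih =>
    intro G _ _ _ p hp g hcard hord hcent
    by_cases hGtriv : Subsingleton G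
    · exact (Subsingleton.elim g 1) ▸ (pCore p G).one_mem
    haveI : Nontrivial G := not_subsingleton_iff_nontrivial.mp hGtriv
    haveI : Finite (Subgroup G) := Finite.of_injective _ SetLike.coe_injective
    have htopbot : (⊤ : Subgroup G) ≠ ⊥ := by
      intro h
      obtain ⟨x, y, hxy⟩ := exists_pair_ne G
      exact hxy (by
        have hx : x ∈ (⊥ : Subgroup G) := h ▸ Subgroup.mem_top x
        have hy : y ∈ (⊥ : Subgroup G) := h ▸ Subgroup.mem_top y
        rw [Subgroup.mem_bot] at hx hy
        rw [hx, hy])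
    obtain ⟨N, ⟨hNnorm, hNbot⟩, hNmin⟩ :=
      (Finite.to_wellFoundedLT (α := Subgroup G)).wf.has_min
        {K : Subgroup G | K.Normal ∧ K ≠ ⊥} ⟨⊤, inferInstance, htopbot⟩
    haveI := hNnorm
    -- N is abelian
    have hNN : ⁅N, N⁆ ≤ N := Subgroup.commutator_le_left N N
    have hNder : ⁅N, N⁆ ≠ N := by
      intro hEq
      have hmap : Subgroup.map N.subtype ⁅(⊤ : Subgroup N), (⊤ : Subgroup N)⁆ =
          Subgroup.map N.subtype ⊤ := by
        rw [Subgroup.map_commutator]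
        have h1 : Subgroup.map N.subtype ⊤ = N := by
          rw [← MonoidHom.range_eq_map, Subgroup.range_subtype]
        rw [h1, hEq]
      have htop : ⁅(⊤ : Subgroup N), (⊤ : Subgroup N)⁆ = ⊤ :=
        Subgroup.map_injective N.subtype_injective hmap
      have hts : ∀ m, derivedSeries (↥N) m = ⊤ := by
        intro m
        induction m with
        | zero => rfl
        | succ m ihm => rw [derivedSeries_succ, ihm, htop]
      obtain ⟨m, hm⟩ := Group.IsSolvable.solvable (G := ↥N)
      rw [hts m] at hm
      apply hNbot
      rw [Subgroup.eq_bot_iff_forall]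
      intro x hx
      have : (⟨x, hx⟩ : ↥N) ∈ (⊥ : Subgroup ↥N) := hm ▸ Subgroup.mem_top _
      rw [Subgroup.mem_bot] at this
      exact congrArg Subtype.val this
    have hNNbot : ⁅N, N⁆ = ⊥ := by
      by_contra hne
      exact hNmin ⁅N, N⁆ ⟨inferInstance, hne⟩ (lt_of_le_of_ne hNN hNder)
    have hNcomm : ∀ a ∈ N, ∀ b ∈ N, a * b = b * a := by
      intro a ha b hb
      have := Subgroup.commutator_mem_commutator ha hb
      rw [hNNbot, Subgroup.mem_bot] at this
      exact commutatorElement_eq_one_iff_mul_comm.mp this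
    -- N is a q-group
    have hN1 : Nat.card N ≠ 1 := fun h => hNbot (Subgroup.card_eq_one.mp h)
    set q := (Nat.card N).minFac with hqdef
    have hq : q.Prime := Nat.minFac_prime hN1
    haveI : Fact q.Prime := ⟨hq⟩
    obtain ⟨y, hy⟩ := exists_prime_orderOf_dvd_card' (G := ↥N) q (Nat.minFac_dvd _)
    set T : Subgroup G :=
      { carrier := {x | x ∈ N ∧ x ^ q = 1}
        one_mem' := ⟨N.one_mem, one_pow q⟩
        mul_mem' := by
          rintro a b ⟨haN, ha⟩ ⟨hbN, hb⟩
          exact ⟨N.mul_mem haN hbN,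
            by rw [Commute.mul_pow (hNcomm a haN b hbN), ha, hb, one_mul]⟩
        inv_mem' := by
          rintro a ⟨haN, ha⟩
          exact ⟨N.inv_mem haN, by rw [inv_pow, ha, inv_one]⟩ } with hTdef
    have hTnorm : T.Normal := by
      constructor
      rintro t ⟨htN, htq⟩ γ
      refine ⟨hNnorm.conj_mem t htN γ, ?_⟩
      have := map_pow (MulAut.conj γ).toMonoidHom t q
      simp only [MulEquiv.coe_toMonoidHom, MulAut.conj_apply] at this
      rw [← this, htq, mul_one, mul_inv_cancel]
    have hTbot : T ≠ ⊥ := by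
      intro hbot
      have hyq : (y : G) ^ q = 1 := by
        have : y ^ q = 1 := by rw [← hy]; exact pow_orderOf_eq_one y
        simpa [Subtype.ext_iff] using this
      have hyT : (y : G) ∈ T := ⟨y.2, hyq⟩
      rw [hbot, Subgroup.mem_bot] at hyT
      have : y = 1 := Subtype.ext hyT
      rw [this, orderOf_one] at hy
      exact hq.one_lt.ne hy
    have hTN : T = N := by
      have hle : T ≤ N := fun x hx => hx.1
      by_contra hne
      exact hNmin T ⟨hTnorm, hTbot⟩ (lt_of_le_of_ne hle hne)
    have hNq : IsPGroup q ↥N := by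
      intro x
      refine ⟨1, ?_⟩
      have hxT : (x : G) ∈ T := by rw [hTN]; exact x.2
      ext
      simpa [pow_one] using hxT.2
    -- pass to the quotient G ⧸ N
    set π := QuotientGroup.mk' N with hπdef
    have hπs : Function.Surjective π := QuotientGroup.mk'_surjective N
    have hcard2 : Nat.card (G ⧸ N) ≤ n := by
      have h1 : Nat.card G = Nat.card (G ⧸ N) * Nat.card N :=
        Subgroup.card_eq_card_quotient_mul_card_subgroup N
      have h2 : 1 < Nat.card N := (Subgroup.one_lt_card_iff_ne_bot N).mpr hNbot
      have h3 : 0 < Nat.card (G ⧸ N) := Nat.card_pos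
      nlinarith
    have hordπ : ∃ j, orderOf (π g) = p ^ j := by
      obtain ⟨k, hk⟩ := hord
      obtain ⟨j, _, hj⟩ := (Nat.dvd_prime_pow hp.out).mp (hk ▸ orderOf_map_dvd π g)
      exact ⟨j, hj⟩
    have hcentQ : CentChief p (π g) := by
      intro X' Y' hX' hY' hle' hne' hchief' hcop' x' hx'
      set X := Subgroup.comap π X' with hXdef
      set Y := Subgroup.comap π Y' with hYdef
      have hkerY : N ≤ Y := by
        intro z hz
        have : π z = 1 := (QuotientGroup.eq_one_iff z).mpr hz
        rw [hYdef, Subgroup.mem_comap, this]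
        exact Y'.one_mem
      have hXc : X.Normal := hX'.comap π
      have hYc : Y.Normal := hY'.comap π
      have hYX : Y ≤ X := Subgroup.comap_mono hle'
      have hmapX : Subgroup.map π X = X' := Subgroup.map_comap_eq_self_of_surjective hπs X'
      have hmapY : Subgroup.map π Y = Y' := Subgroup.map_comap_eq_self_of_surjective hπs Y'
      have hYXne : Y ≠ X := fun h => hne' (by rw [← hmapY, ← hmapX, h])
      have hchief : ∀ K : Subgroup G, K.Normal → Y ≤ K → K ≤ X → K = Y ∨ K = X := by
        intro K hK h1 h2
        have hkerK : (QuotientGroup.mk' N).ker ≤ K := by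
          rw [QuotientGroup.ker_mk']
          exact le_trans hkerY h1
        have hmapK : (Subgroup.map π K).Normal := hK.map π hπs
        rcases hchief' (Subgroup.map π K) hmapK
            (by rw [← hmapY]; exact Subgroup.map_mono h1)
            (by rw [← hmapX]; exact Subgroup.map_mono h2) with h | h
        · left; rw [← Subgroup.comap_map_eq_self hkerK, h, hYdef]
        · right; rw [← Subgroup.comap_map_eq_self hkerK, h, hXdef]
      have hcop : Nat.Coprime (Y.relIndex X) p := by
        rw [hYdef, Subgroup.relIndex_comap, hmapX]
        exact hcop'
      obtain ⟨x, hxX, rfl⟩ : ∃ x, x ∈ X ∧ π x = x' := by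
        obtain ⟨x, rfl⟩ := hπs x'
        exact ⟨x, by rwa [hXdef, Subgroup.mem_comap], rfl⟩
      have hres := hcent X Y hXc hYc hYX hYXne hchief hcop x hxX
      rw [← map_commutatorElement]
      rwa [hYdef, Subgroup.mem_comap] at hres
    have hgQ : π g ∈ pCore p (G ⧸ N) := ih (G ⧸ N) p (π g) hcard2 hordπ hcentQ
    set M := Subgroup.comap π (pCore p (G ⧸ N)) with hMdef
    have hMnorm : M.Normal := pCore_normal.comap π
    have hgM : g ∈ M := hgQ
    have hNM : N ≤ M := by
      intro z hz
      have : π z = 1 := (QuotientGroup.eq_one_iff z).mpr hz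
      rw [hMdef, Subgroup.mem_comap, this]
      exact (pCore p (G ⧸ N)).one_mem
    by_cases hqp : q = p
    · subst hqp
      have hMp : IsPGroup q ↥M := by
        refine IsPGroup.comap_of_ker_isPGroup pCore_isPGroup π ?_
        have : π.ker = N := QuotientGroup.ker_mk' N
        rw [this]
        exact hNq
      exact le_pCore hMnorm hMp hgM
    · have hqpco : Nat.Coprime (Nat.card N) p := by
        obtain ⟨a, ha⟩ := IsPGroup.iff_card.mp hNq
        rw [ha]
        exact ((Nat.coprime_primes hq hp.out).mpr hqp).pow_left a
      have hcentN : g ∈ Subgroup.centralizer (N : Set G) := by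
        have happ := hcent N ⊥ hNnorm inferInstance bot_le (Ne.symm hNbot)
          (by
            intro K hK _ hKN
            by_cases hKbot : K = ⊥
            · exact Or.inl hKbot
            · right
              by_contra hKN'
              exact hNmin K ⟨hK, hKbot⟩ (lt_of_le_of_ne hKN hKN'))
          (by rwa [Subgroup.relIndex_bot_left])
        rw [Subgroup.mem_centralizer_iff]
        intro h hh
        have h1 := happ h hh
        rw [Subgroup.mem_bot] at h1
        exact (commutatorElement_eq_one_iff_mul_comm.mp h1).symm
      have hCnorm : (Subgroup.centralizer (N : Set G)).Normal := by
        constructor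
        intro z hz γ
        intro h hh
        have hh' : γ⁻¹ * h * γ ∈ N := by
          have := hNnorm.conj_mem h hh γ⁻¹
          simpa using this
        have e := hz _ hh'
        have e1 : h * (γ * z * γ⁻¹) = γ * ((γ⁻¹ * h * γ) * z) * γ⁻¹ := by group
        rw [e1, e]
        group
      set K := M ⊓ Subgroup.centralizer (N : Set G) with hKdef
      have hKnorm : K.Normal := by
        constructor
        intro z hz γ
        exact ⟨hMnorm.conj_mem z hz.1 γ, hCnorm.conj_mem z hz.2 γ⟩
      haveI := hKnorm
      have hNK : N ≤ K := by
        intro z hz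
        exact ⟨hNM hz, fun h hh => hNcomm h hh z hz⟩
      have hgK : g ∈ K := ⟨hgM, hcentN⟩
      have hKQp : IsPGroup p (↥K ⧸ N.subgroupOf K) := by
        intro z
        obtain ⟨⟨k, hkK⟩, rfl⟩ := QuotientGroup.mk'_surjective _ z
        have hkM : k ∈ M := hkK.1
        obtain ⟨j, hj⟩ := pCore_isPGroup (G := G ⧸ N) (p := p) ⟨π k, hkM⟩
        refine ⟨j, ?_⟩
        rw [← map_pow, QuotientGroup.mk'_apply, QuotientGroup.eq_one_iff]
        have hπk : (π k) ^ p ^ j = 1 := by simpa [Subtype.ext_iff] using hj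
        have hkN : k ^ p ^ j ∈ N := by
          rw [← QuotientGroup.eq_one_iff (k ^ p ^ j), ← QuotientGroup.mk'_apply N, map_pow]
          exact hπk
        simpa [Subgroup.mem_subgroupOf] using hkN
      have hker : (QuotientGroup.mk' (N.subgroupOf K)).ker ≤ Subgroup.center ↥K := by
        rw [QuotientGroup.ker_mk']
        rintro ⟨x, hxK⟩ hx
        rw [Subgroup.mem_subgroupOf] at hx
        rw [Subgroup.mem_center_iff]
        rintro ⟨y, hyK⟩
        ext
        exact (hyK.2 x hx).symm
      have hKnil : Group.IsNilpotent ↥K :=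
        have := hKQp.isNilpotent; _root_.isNilpotent_of_ker_le_center _ hker
      have hgP : IsPGroup p (Subgroup.zpowers (⟨g, hgK⟩ : ↥K)) := by
        rw [IsPGroup.iff_card]
        obtain ⟨k, hk⟩ := hord
        exact ⟨k, by rw [Nat.card_zpowers, Subgroup.orderOf_mk, hk]⟩
      obtain ⟨P, hP⟩ := hgP.exists_le_sylow
      have h03 := (isNilpotent_of_finite_tfae (G := ↥K)).out 0 3
      have hPnorm : (P : Subgroup ↥K).Normal := h03.mp hKnil p hp P
      haveI := hPnorm
      haveI : Finite (Subgroup ↥K) := Finite.of_injective _ SetLike.coe_injective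
      haveI : Finite (Sylow p ↥K) :=
        Finite.of_injective (fun P : Sylow p ↥K => (P : Subgroup ↥K))
          (fun _ _ h => Sylow.ext h)
      haveI : (P : Subgroup ↥K).Characteristic := Sylow.characteristic_of_normal P hPnorm
      have hfinal : ((P : Subgroup ↥K).map K.subtype).Normal := inferInstance
      have hfinp : IsPGroup p ((P : Subgroup ↥K).map K.subtype) := P.2.map _
      exact le_pCore hfinal hfinp ⟨⟨g, hgK⟩, hP (Subgroup.mem_zpowers _), rfl⟩

/-- Let `G` be a finite solvable group and `p` a prime. A `p`-element
`g` of `G` centralizes all chief factors of `G` of order coprime to `p` if and only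
if `g ∈ O_p(G)`. -/
theorem stmt10 {G : Type*} [Group G] [Finite G] [Group.IsSolvable G] (p : ℕ) [Fact p.Prime]
    (g : G) (hg : ∃ k : ℕ, orderOf g = p ^ k) :
    (∀ X Y : Subgroup G, X.Normal → Y.Normal → Y ≤ X → Y ≠ X →
      -- `X/Y` is a chief factor of `G` …
      (∀ K : Subgroup G, K.Normal → Y ≤ K → K ≤ X → K = Y ∨ K = X) →
      -- … of order coprime to `p`
      Nat.Coprime (Y.relIndex X) p →
      -- then `g` centralizes `X/Y`
      ∀ x ∈ X, ⁅g, x⁆ ∈ Y) ↔ g ∈ pCore p G := by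
  constructor
  · intro h
    exact forward_aux (Nat.card G) G p g le_rfl hg h
  · intro hg' X Y hX hY hYX _ _ hcop x hx
    exact backward_aux hg' hX hY hYX hcop hx
end

section
/- Let G be a profinite group, g a p-element of G, and suppose g centralizes all chief factors of order coprime to p of some open normal prosolvable subgroup M of G with g ∈ M. Then g lies in O_p(M); in particular g has finite order modulo O_p(G). -/
open Subgroup
open scoped commutatorElement

/-- Internal chief-factor-centralizing hypothesis in a group `H`. -/
def HCent (p : ℕ) {H : Type*} [Group H] (g : H) : Prop :=
  ∀ X Y : Subgroup H, Y ≤ X → X.Normal → Y.Normal → Y ≠ X →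
    (∀ K : Subgroup H, Y ≤ K → K ≤ X → K.Normal → K = Y ∨ K = X) →
    (Y.relIndex X).Coprime p → ∀ x ∈ X, ⁅g, x⁆ ∈ Y

theorem HCent.map {p : ℕ} {H H' : Type*} [Group H] [Group H'] {g : H} (hc : HCent p g)
    (φ : H →* H') (hφ : Function.Surjective φ) : HCent p (φ g) := by
  intro X Y hYX hX hY hne hchief hcop x hx
  obtain ⟨x0, rfl⟩ := hφ x
  have hker : ∀ {K : Subgroup H'}, φ.ker ≤ Y.comap φ := fun {K} =>
    Subgroup.ker_le_comap φ Y
  have key := hc (X.comap φ) (Y.comap φ) (comap_mono hYX) (hX.comap φ) (hY.comap φ)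
    (by
      intro h; apply hne
      have := congrArg (Subgroup.map φ) h
      rwa [map_comap_eq_self_of_surjective hφ, map_comap_eq_self_of_surjective hφ] at this)
    (by
      intro K h1 h2 hKn
      have hkK : φ.ker ≤ K := le_trans (Subgroup.ker_le_comap φ Y) h1
      have h1' : Y ≤ K.map φ := by
        have := map_mono (f := φ) h1
        rwa [map_comap_eq_self_of_surjective hφ] at this
      have h2' : K.map φ ≤ X := by
        have := map_mono (f := φ) h2
        rwa [map_comap_eq_self_of_surjective hφ] at this
      rcases hchief (K.map φ) h1' h2' (hKn.map φ hφ) with h | h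
      · left; rw [← comap_map_eq_self hkK, h]
      · right; rw [← comap_map_eq_self hkK, h])
    (by rwa [relIndex_comap, map_comap_eq_self_of_surjective hφ])
    x0 hx
  have : φ ⁅g, x0⁆ ∈ Y := key
  rwa [map_commutatorElement] at this

/-- A cyclic group generated by an element of `p`-power order is a `p`-group. -/
theorem isPGroup_zpowers {p : ℕ} {H : Type*} [Group H] {x : H} {k : ℕ}
    (hx : orderOf x = p ^ k) : IsPGroup p (Subgroup.zpowers x) := by
  intro q
  refine ⟨k, ?_⟩
  obtain ⟨m, hm⟩ := Subgroup.mem_zpowers_iff.mp q.2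
  have hxk : x ^ (p ^ k) = 1 := by rw [← hx]; exact pow_orderOf_eq_one x
  have : ((q : H)) ^ (p ^ k) = 1 := by
    rw [← hm, ← zpow_natCast, ← zpow_mul, mul_comm, zpow_mul, zpow_natCast, hxk, one_zpow]
  exact Subtype.ext (by simpa using this)

/-- `O_p(H)`: the subgroup generated by all normal `p`-subgroups. -/
def pOp (p : ℕ) (H : Type*) [Group H] : Subgroup H :=
  sSup {K : Subgroup H | K.Normal ∧ IsPGroup p (↥K)}

theorem pOp_aux (p : ℕ) (H : Type*) [Group H] [Finite H] :
    IsPGroup p (↥(pOp p H)) ∧ (pOp p H).Normal := by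
  have key : ∀ s : Set (Subgroup H), s ⊆ {K : Subgroup H | K.Normal ∧ IsPGroup p (↥K)} →
      IsPGroup p (↥(sSup s)) ∧ (sSup s).Normal := by
    intro s hs
    refine Set.Finite.induction_on_subset
      (motive := fun (t : Set (Subgroup H)) _ => IsPGroup p (↥(sSup t)) ∧ (sSup t).Normal) s (Set.toFinite s) ?_ ?_
    · show IsPGroup p (↥(sSup (∅ : Set (Subgroup H)))) ∧ (sSup (∅ : Set (Subgroup H))).Normal
      rw [sSup_empty]
      exact ⟨IsPGroup.of_bot, inferInstance⟩
    · rintro a s' ha _ _ ih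
      show IsPGroup p (↥(sSup (insert a s'))) ∧ (sSup (insert a s')).Normal
      rw [sSup_insert]
      have h1 := ih
      have h2 : a ∈ {K : Subgroup H | K.Normal ∧ IsPGroup p (↥K)} := hs ha
      haveI : (sSup s').Normal := h1.2
      haveI : a.Normal := h2.1
      exact ⟨IsPGroup.to_sup_of_normal_right h2.2 h1.1, inferInstance⟩
  exact key _ le_rfl

theorem pOp_isPGroup (p : ℕ) (H : Type*) [Group H] [Finite H] : IsPGroup p (↥(pOp p H)) :=
  (pOp_aux p H).1

theorem pOp_normal (p : ℕ) (H : Type*) [Group H] [Finite H] : (pOp p H).Normal :=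
  (pOp_aux p H).2

theorem mem_pOp_of {p : ℕ} {H : Type*} [Group H] {K : Subgroup H} (hn : K.Normal)
    (hpg : IsPGroup p (↥K)) {g : H} (hg : g ∈ K) : g ∈ pOp p H :=
  le_sSup (show K ∈ {K : Subgroup H | K.Normal ∧ IsPGroup p (↥K)} from ⟨hn, hpg⟩) hg

theorem pOp_map_le (p : ℕ) {H : Type*} [Group H] [Finite H] (φ : MulAut H) :
    (pOp p H).map φ.toMonoidHom ≤ pOp p H :=
  le_sSup (show (pOp p H).map φ.toMonoidHom ∈ {K : Subgroup H | K.Normal ∧ IsPGroup p (↥K)} from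
    ⟨(pOp_normal p H).map _ φ.surjective, (pOp_isPGroup p H).map _⟩)

/-- The centralizer of a normal subgroup is normal. -/
theorem centralizer_normal_of_normal {H : Type*} [Group H] (V : Subgroup H) [hV : V.Normal] :
    (Subgroup.centralizer (V : Set H)).Normal := by
  constructor
  intro n hn h
  rw [Subgroup.mem_centralizer_iff] at hn ⊢
  intro y hy
  have hy' : h⁻¹ * y * h ∈ V := by
    have := hV.conj_mem y hy h⁻¹
    simpa using this
  have := hn _ hy'
  -- (h⁻¹ y h) n = n (h⁻¹ y h)  ⟹  y (h n h⁻¹) = (h n h⁻¹) y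
  have := congrArg (fun z => h * z * h⁻¹) this
  simpa [mul_assoc] using this
open Subgroup

universe u

theorem finMain {p : ℕ} (hp : p.Prime) (n : ℕ) :
    ∀ (H : Type u) [Group H] [Finite H] (g : H), Nat.card H ≤ n → IsSolvable H →
      (∃ k : ℕ, orderOf g = p ^ k) → HCent p g → g ∈ pOp p H := by
  haveI : Fact p.Prime := ⟨hp⟩
  induction n with
  | zero =>
    intro H _ _ g hcard _ _ _
    exact absurd hcard (by simpa using Nat.card_pos.ne')
  | succ n ih =>
    intro H _ _ g hcard hsolv hg hcent
    by_cases hss : Subsingleton H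
    · have : g = 1 := Subsingleton.elim g 1
      rw [this]; exact one_mem _
    haveI : Nontrivial H := not_subsingleton_iff_nontrivial.mp hss
    -- a minimal nontrivial normal subgroup V
    obtain ⟨V, hVmem, hVmin'⟩ := (wellFounded_lt (α := Subgroup H)).has_min
      {W : Subgroup H | W.Normal ∧ W ≠ ⊥} ⟨⊤, inferInstance, bot_ne_top.symm⟩
    haveI hVn : V.Normal := hVmem.1
    have hVne : V ≠ ⊥ := hVmem.2
    have hmin : ∀ K : Subgroup H, K.Normal → K ≤ V → K = ⊥ ∨ K = V := by
      intro K hKn hKV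
      by_cases hKbot : K = ⊥
      · exact Or.inl hKbot
      · rcases lt_or_eq_of_le hKV with h | h
        · exact absurd h (hVmin' K ⟨hKn, hKbot⟩)
        · exact Or.inr h
    -- V is abelian
    have hVV : ⁅V, V⁆ = ⊥ := by
      rcases hmin ⁅V, V⁆ inferInstance (Subgroup.commutator_le_left V V) with h | h
      · exact h
      · exfalso
        have hle : ∀ m : ℕ, V ≤ derivedSeries H m := by
          intro m
          induction m with
          | zero => exact le_top
          | succ m ihm =>
            calc V = ⁅V, V⁆ := h.symm
              _ ≤ ⁅derivedSeries H m, derivedSeries H m⁆ := Subgroup.commutator_mono ihm ihm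
              _ = derivedSeries H (m + 1) := (derivedSeries_succ H m).symm
        obtain ⟨m, hm⟩ := hsolv.solvable
        exact hVne (le_bot_iff.mp (hm ▸ hle m))
    have hVcomm : V ≤ Subgroup.centralizer (V : Set H) :=
      Subgroup.commutator_eq_bot_iff_le_centralizer.mp hVV
    -- the p-torsion subgroup of V
    let Vp : Subgroup H :=
      { carrier := {x | x ∈ V ∧ ∃ k : ℕ, x ^ p ^ k = 1}
        one_mem' := ⟨one_mem V, 0, one_pow _⟩
        mul_mem' := by
          rintro x y ⟨hxV, k, hk⟩ ⟨hyV, l, hl⟩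
          refine ⟨mul_mem hxV hyV, k + l, ?_⟩
          have hcomm : Commute x y :=
            (Subgroup.mem_centralizer_iff.mp (hVcomm hxV) y hyV).symm
          rw [hcomm.mul_pow, pow_add, pow_mul, hk, one_pow, one_mul, mul_comm (p ^ k),
            pow_mul, hl, one_pow]
        inv_mem' := by
          rintro x ⟨hxV, k, hk⟩
          exact ⟨inv_mem hxV, k, by rw [inv_pow, hk, inv_one]⟩ }
    have hVpmem : ∀ x : H, x ∈ Vp ↔ x ∈ V ∧ ∃ k : ℕ, x ^ p ^ k = 1 := fun x => Iff.rfl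
    have hVpn : Vp.Normal := by
      constructor
      rintro x ⟨hxV, k, hk⟩ h
      refine ⟨hVn.conj_mem x hxV h, k, ?_⟩
      rw [conj_pow, hk, mul_one, mul_inv_cancel]
    have hVpV : Vp ≤ V := fun x hx => hx.1
    -- quotient by V
    have hcardV : 1 < Nat.card V := by
      rcases Nat.lt_or_ge (Nat.card V) 2 with h | h
      · interval_cases h' : Nat.card (↥V)
        · exact absurd h' Nat.card_pos.ne'
        · exact absurd (Subgroup.card_eq_one.mp h') hVne
      · exact h
    have hcardQ : Nat.card (H ⧸ V) ≤ n := by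
      have h1 : Nat.card H = Nat.card (H ⧸ V) * Nat.card V :=
        Subgroup.card_eq_card_quotient_mul_card_subgroup V
      have h2 : 0 < Nat.card (H ⧸ V) := Nat.card_pos
      nlinarith [hcard, hcardV, h1, h2]
    have hgq : ∃ k, orderOf ((QuotientGroup.mk' V) g) = p ^ k := by
      obtain ⟨k, hk⟩ := hg
      have hdvd := orderOf_map_dvd (QuotientGroup.mk' V) g
      rw [hk] at hdvd
      obtain ⟨j, _, hj⟩ := (Nat.dvd_prime_pow hp).mp hdvd
      exact ⟨j, hj⟩
    have hgOp : (QuotientGroup.mk' V) g ∈ pOp p (H ⧸ V) :=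
      ih (H ⧸ V) ((QuotientGroup.mk' V) g) hcardQ (show Group.IsSolvable (H ⧸ V) from haveI : Group.IsSolvable H := hsolv; inferInstance) hgq
        (hcent.map _ (QuotientGroup.mk'_surjective V))
    set P := (pOp p (H ⧸ V)).comap (QuotientGroup.mk' V) with hPdef
    haveI hPn : P.Normal := (pOp_normal p (H ⧸ V)).comap _
    have hgP : g ∈ P := hgOp
    have hPpow : ∀ x ∈ P, ∃ k, x ^ p ^ k ∈ V := by
      intro x hx
      obtain ⟨k, hk⟩ := pOp_isPGroup p (H ⧸ V) ⟨(QuotientGroup.mk' V) x, hx⟩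
      refine ⟨k, ?_⟩
      have h2 : ((QuotientGroup.mk' V) x) ^ p ^ k = 1 := congrArg Subtype.val hk
      rw [← map_pow] at h2
      have h3 : x ^ p ^ k ∈ (QuotientGroup.mk' V).ker := by
        rw [MonoidHom.mem_ker]; exact h2
      rwa [QuotientGroup.ker_mk'] at h3
    rcases hmin Vp hVpn hVpV with hVpbot | hVpeq
    · -- Case B : V is a p'-group
      have hpV : ¬ p ∣ Nat.card V := by
        intro hdvd
        obtain ⟨v, hv⟩ := exists_prime_orderOf_dvd_card' (G := ↥V) p hdvd
        have hvpow : (v : H) ^ p = 1 := by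
          have : v ^ p = 1 := by rw [← hv]; exact pow_orderOf_eq_one v
          simpa using congrArg Subtype.val this
        have hvV : (v : H) ∈ Vp := ⟨v.2, 1, by rwa [pow_one]⟩
        rw [hVpbot] at hvV
        have hv1 : v = (1 : ↥V) := Subtype.ext (by simpa using hvV)
        rw [hv1, orderOf_one] at hv
        exact hp.one_lt.ne hv
      have hcop : ((⊥ : Subgroup H).relIndex V).Coprime p := by
        rw [Subgroup.relIndex_bot_left]
        exact Nat.Coprime.symm ((Nat.Prime.coprime_iff_not_dvd hp).mpr hpV)
      have hgCent : g ∈ Subgroup.centralizer (V : Set H) := by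
        rw [Subgroup.mem_centralizer_iff]
        intro y hy
        have hYne : (⊥ : Subgroup H) ≠ V := fun h => hVne h.symm
        have h1 := hcent V ⊥ bot_le hVn inferInstance hYne
          (fun K h1 h2 hKn => hmin K hKn h2) hcop y hy
        have h2 : ⁅g, y⁆ = 1 := by simpa using h1
        exact (commutatorElement_eq_one_iff_mul_comm.mp h2).symm
      set C := P ⊓ Subgroup.centralizer (V : Set H) with hCdef
      haveI : (Subgroup.centralizer (V : Set H)).Normal := centralizer_normal_of_normal V
      haveI hCn : C.Normal := inferInstance
      have hgC2 : g ∈ C := ⟨hgP, hgCent⟩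
      have hVP : V ≤ P := by
        intro v hv
        show (QuotientGroup.mk' V) v ∈ pOp p (H ⧸ V)
        have h1 : (QuotientGroup.mk' V) v = 1 := (QuotientGroup.eq_one_iff v).mpr hv
        rw [h1]; exact one_mem _
      have hVC : V ≤ C := le_inf hVP hVcomm
      have hcen : V.subgroupOf C ≤ Subgroup.center (↥C) := by
        intro v hv
        rw [Subgroup.mem_center_iff]
        intro c
        have h1 : (c : H) ∈ Subgroup.centralizer (V : Set H) := c.2.2
        have h2 := Subgroup.mem_centralizer_iff.mp h1 (v : H) (Subgroup.mem_subgroupOf.mp hv)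
        exact Subtype.ext (by simpa using h2.symm)
      have hCq : IsPGroup p (↥C ⧸ Subgroup.center ↥C) := by
        intro x
        induction x using QuotientGroup.induction_on with
        | H c =>
          obtain ⟨k, hk⟩ := hPpow (c : H) c.2.1
          refine ⟨k, ?_⟩
          rw [← QuotientGroup.mk_pow]
          rw [QuotientGroup.eq_one_iff]
          refine hcen ?_
          rw [Subgroup.mem_subgroupOf]
          simpa using hk
      have hCnil : Group.IsNilpotent (↥C) := of_quotient_center_nilpotent hCq.isNilpotent
      obtain ⟨S⟩ : Nonempty (Sylow p (↥C)) := inferInstance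
      have htfae : Group.IsNilpotent (↥C) ↔
          ∀ (q : ℕ) (_hq : Fact q.Prime) (Q : Sylow q (↥C)), (↑Q : Subgroup ↥C).Normal :=
        (isNilpotent_of_finite_tfae (G := ↥C)).out 0 3
      have hSn : (S : Subgroup ↥C).Normal := htfae.mp hCnil p ⟨hp⟩ S
      haveI := Sylow.unique_of_normal S hSn
      have hmemS : ∀ (x : ↥C) (k : ℕ), orderOf x = p ^ k → x ∈ (S : Subgroup ↥C) := by
        intro x k hk
        obtain ⟨Q, hQ⟩ := (isPGroup_zpowers hk).exists_le_sylow
        have hQS : Q = S := Subsingleton.elim Q S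
        exact hQS ▸ hQ (Subgroup.mem_zpowers x)
      have horder : ∀ x : ↥C, ∃ k : ℕ, orderOf x = p ^ k → True := fun _ => ⟨0, fun _ => trivial⟩
      set T := (S : Subgroup ↥C).map C.subtype with hTdef
      have hTorder : ∀ x : ↥C, x ∈ (S : Subgroup ↥C) → ∃ k : ℕ, orderOf x = p ^ k := by
        intro x hx
        obtain ⟨k, hk⟩ := S.isPGroup' ⟨x, hx⟩
        have h2 : x ^ p ^ k = 1 := congrArg Subtype.val hk
        obtain ⟨j, _, hj⟩ := (Nat.dvd_prime_pow hp).mp (orderOf_dvd_of_pow_eq_one h2)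
        exact ⟨j, hj⟩
      have hTn : T.Normal := by
        constructor
        intro x hx h
        obtain ⟨s, hsS, hs⟩ := hx
        have hxc : x ∈ C := by rw [← hs]; exact s.2
        have hconj : h * x * h⁻¹ ∈ C := hCn.conj_mem x hxc h
        obtain ⟨k, hk⟩ := hTorder s hsS
        have hordx : orderOf x = p ^ k := by
          rw [← hs, ← hk]
          exact orderOf_injective C.subtype (Subgroup.subtype_injective C) s
        have hordconj : orderOf (⟨h * x * h⁻¹, hconj⟩ : ↥C) = p ^ k := by
          have e1 : orderOf (h * x * h⁻¹) = orderOf x := by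
            have := orderOf_injective (MulAut.conj h).toMonoidHom
              (MulEquiv.injective (MulAut.conj h)) x
            simpa [MulAut.conj_apply] using this
          have e2 : orderOf (⟨h * x * h⁻¹, hconj⟩ : ↥C) = orderOf (h * x * h⁻¹) :=
            (orderOf_injective C.subtype (Subgroup.subtype_injective C) _).symm
          rw [e2, e1, hordx]
        have : (⟨h * x * h⁻¹, hconj⟩ : ↥C) ∈ (S : Subgroup ↥C) := hmemS _ k hordconj
        exact ⟨_, this, rfl⟩
      have hTp : IsPGroup p (↥T) := S.isPGroup'.map _
      have hgT : g ∈ T := by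
        obtain ⟨k, hk⟩ := hg
        have hord : orderOf (⟨g, hgC2⟩ : ↥C) = p ^ k := by
          rw [← hk]
          exact (orderOf_injective C.subtype (Subgroup.subtype_injective C) ⟨g, hgC2⟩).symm
        exact ⟨⟨g, hgC2⟩, hmemS _ k hord, rfl⟩
      exact mem_pOp_of hTn hTp hgT
    · -- Case A : V is a p-group
      have hVpG : IsPGroup p (↥V) := by
        intro v
        have hv : (v : H) ∈ Vp := by rw [hVpeq]; exact v.2
        obtain ⟨-, k, hk⟩ := hv
        exact ⟨k, Subtype.ext (by simpa using hk)⟩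
      have hPp : IsPGroup p (↥P) := by
        intro x
        obtain ⟨k, hk⟩ := hPpow (x : H) x.2
        obtain ⟨l, hl⟩ := hVpG ⟨(x : H) ^ p ^ k, hk⟩
        refine ⟨k + l, ?_⟩
        have h2 : ((x : H) ^ p ^ k) ^ p ^ l = 1 := congrArg Subtype.val hl
        refine Subtype.ext ?_
        push_cast
        rw [pow_add, pow_mul]
        exact h2
      exact mem_pOp_of hPn hPp hgP

theorem transfer_hcent {p : ℕ} {G : Type*} [Group G] [TopologicalSpace G] [IsTopologicalGroup G]
    {M : Subgroup G} {g : G} (hgM : g ∈ M)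
    (hcent : ∀ X Y : Subgroup G, Y ≤ X → X ≤ M → IsOpen (Y : Set G) →
      (∀ m ∈ M, ∀ x ∈ X, m * x * m⁻¹ ∈ X) →
      (∀ m ∈ M, ∀ y ∈ Y, m * y * m⁻¹ ∈ Y) →
      Y ≠ X →
      (∀ K : Subgroup G, Y ≤ K → K ≤ X →
        (∀ m ∈ M, ∀ k ∈ K, m * k * m⁻¹ ∈ K) → K = Y ∨ K = X) →
      Nat.Coprime (Y.relIndex X) p →
      ∀ x ∈ X, ⁅g, x⁆ ∈ Y)
    (N : Subgroup G) [N.Normal] (hNopen : IsOpen (N : Set G)) (hNM : N ≤ M) :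
    HCent p (⟨(QuotientGroup.mk' N) g,
      Subgroup.mem_map_of_mem _ hgM⟩ : ↥(M.map (QuotientGroup.mk' N))) := by
  set φ := QuotientGroup.mk' N with hφ
  have hsurj : Function.Surjective φ := QuotientGroup.mk'_surjective N
  have hkerφ : φ.ker = N := QuotientGroup.ker_mk' N
  set Mb := M.map φ with hMb
  set ι := Mb.subtype with hι
  have hιinj : Function.Injective ι := Subgroup.subtype_injective Mb
  intro X₀ Y₀ hYX₀ hXn₀ hYn₀ hne₀ hchief₀ hcop₀ x₀ hx₀
  set X₁ := X₀.map ι with hX₁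
  set Y₁ := Y₀.map ι with hY₁
  set X := X₁.comap φ with hX
  set Y := Y₁.comap φ with hY
  have hMcomap : Mb.comap φ = M := by
    rw [hMb, comap_map_eq, hkerφ, sup_eq_left.mpr hNM]
  have hX₁M : X₁ ≤ Mb := map_subtype_le X₀
  have hY₁M : Y₁ ≤ Mb := map_subtype_le Y₀
  have hXM : X ≤ M := le_trans (comap_mono hX₁M) (le_of_eq hMcomap)
  have hYX : Y ≤ X := comap_mono (map_mono hYX₀)
  have hNY : N ≤ Y := by
    intro v hv
    show φ v ∈ Y₁
    have h1 : φ v = 1 := by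
      rw [← hkerφ] at hv; exact hv
    rw [h1]; exact one_mem _
  have hYopen : IsOpen (Y : Set G) := Subgroup.isOpen_mono hNY hNopen
  -- images of elements of M generate Mb
  have hMbsur : ∀ mb ∈ Mb, ∃ m ∈ M, φ m = mb := fun mb hmb => by
    obtain ⟨m, hm, rfl⟩ := hmb; exact ⟨m, hm, rfl⟩
  -- X₁ and Y₁ are normalized by Mb
  have normX₁ : ∀ mb ∈ Mb, ∀ x ∈ X₁, mb * x * mb⁻¹ ∈ X₁ := by
    intro mb hmb x hx
    obtain ⟨x₀', hx₀', rfl⟩ := hx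
    have := hXn₀.conj_mem x₀' hx₀' ⟨mb, hmb⟩
    exact ⟨_, this, rfl⟩
  have normY₁ : ∀ mb ∈ Mb, ∀ y ∈ Y₁, mb * y * mb⁻¹ ∈ Y₁ := by
    intro mb hmb y hy
    obtain ⟨y₀', hy₀', rfl⟩ := hy
    have := hYn₀.conj_mem y₀' hy₀' ⟨mb, hmb⟩
    exact ⟨_, this, rfl⟩
  have normX : ∀ m ∈ M, ∀ x ∈ X, m * x * m⁻¹ ∈ X := by
    intro m hm x hx
    show φ (m * x * m⁻¹) ∈ X₁
    rw [map_mul, map_mul, map_inv]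
    exact normX₁ (φ m) (Subgroup.mem_map_of_mem φ hm) (φ x) hx
  have normY : ∀ m ∈ M, ∀ y ∈ Y, m * y * m⁻¹ ∈ Y := by
    intro m hm y hy
    show φ (m * y * m⁻¹) ∈ Y₁
    rw [map_mul, map_mul, map_inv]
    exact normY₁ (φ m) (Subgroup.mem_map_of_mem φ hm) (φ y) hy
  have hXmap : X.map φ = X₁ := map_comap_eq_self_of_surjective hsurj X₁
  have hYmap : Y.map φ = Y₁ := map_comap_eq_self_of_surjective hsurj Y₁
  have hne : Y ≠ X := by
    intro h
    apply hne₀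
    have h1 : Y₁ = X₁ := by rw [← hYmap, ← hXmap, h]
    exact Subgroup.map_injective hιinj (by rw [← hY₁, ← hX₁, h1])
  have hchief : ∀ K : Subgroup G, Y ≤ K → K ≤ X →
      (∀ m ∈ M, ∀ k ∈ K, m * k * m⁻¹ ∈ K) → K = Y ∨ K = X := by
    intro K h1 h2 hKnorm
    have hNK : φ.ker ≤ K := by rw [hkerφ]; exact le_trans hNY h1
    set K₁ := K.map φ with hK₁def
    have hK₁ : Y₁ ≤ K₁ := by
      have := map_mono (f := φ) h1; rwa [hYmap] at this
    have hK₂ : K₁ ≤ X₁ := by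
      have := map_mono (f := φ) h2; rwa [hXmap] at this
    have hK₁M : K₁ ≤ Mb := le_trans hK₂ hX₁M
    set K₀ := K₁.subgroupOf Mb with hK₀def
    have hmapK₀ : K₀.map ι = K₁ := by
      rw [hK₀def, subgroupOf_map_subtype, inf_eq_left.mpr hK₁M]
    have hK₁norm : ∀ mb ∈ Mb, ∀ x ∈ K₁, mb * x * mb⁻¹ ∈ K₁ := by
      intro mb hmb x hx
      obtain ⟨m, hm, rfl⟩ := hMbsur mb hmb
      obtain ⟨k, hk, rfl⟩ := hx
      have := hKnorm m hm k hk
      refine ⟨m * k * m⁻¹, this, by rw [map_mul, map_mul, map_inv]⟩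
    have hK₀n : K₀.Normal := by
      constructor
      intro k hk mb
      rw [Subgroup.mem_subgroupOf] at hk ⊢
      have hcoe : (↑(mb * k * mb⁻¹) : G ⧸ N) = ↑mb * ↑k * (↑mb)⁻¹ := by
        push_cast; rfl
      rw [hcoe]
      exact hK₁norm _ mb.2 _ hk
    have hY₀K₀ : Y₀ ≤ K₀ := by
      intro y hy
      rw [Subgroup.mem_subgroupOf]
      exact hK₁ (Subgroup.mem_map_of_mem ι hy)
    have hK₀X₀ : K₀ ≤ X₀ := by
      intro k hk
      rw [Subgroup.mem_subgroupOf] at hk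
      exact (Subgroup.mem_map_iff_mem hιinj).mp (hK₂ hk)
    have hKeq : K = K₁.comap φ := (comap_map_eq_self hNK).symm
    rcases hchief₀ K₀ hY₀K₀ hK₀X₀ hK₀n with h | h
    · left
      rw [hKeq, ← hmapK₀, h]
    · right
      rw [hKeq, ← hmapK₀, h]
  have hcop : Nat.Coprime (Y.relIndex X) p := by
    have e1 : Y.relIndex X = Y₁.relIndex X₁ := by
      rw [hY, hX, relIndex_comap, map_comap_eq_self_of_surjective hsurj]
    have e2 : Y₀.relIndex X₀ = Y₁.relIndex X₁ :=
      calc Y₀.relIndex X₀ = (Y₁.comap ι).relIndex X₀ := by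
            rw [hY₁, comap_map_eq_self_of_injective hιinj]
        _ = Y₁.relIndex (X₀.map ι) := relIndex_comap Y₁ ι X₀
        _ = Y₁.relIndex X₁ := by rw [hX₁]
    rw [e1, ← e2]
    exact hcop₀
  have hx₁ : (↑x₀ : G ⧸ N) ∈ X₁ := Subgroup.mem_map_of_mem ι hx₀
  have hx₂ : (↑x₀ : G ⧸ N) ∈ X.map φ := by rw [hXmap]; exact hx₁
  obtain ⟨x, hxX, hxeq⟩ := hx₂
  have hcomm := hcent X Y hYX hXM hYopen normX normY hne hchief hcop x hxX
  have h2 : φ ⁅g, x⁆ ∈ Y₁ := hcomm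
  rw [map_commutatorElement, hxeq] at h2
  refine (Subgroup.mem_map_iff_mem hιinj).mp ?_
  show ι _ ∈ Y₁
  have h3 : ι ⁅(⟨φ g, Subgroup.mem_map_of_mem _ hgM⟩ : ↥Mb), x₀⁆ = ⁅φ g, (↑x₀ : G ⧸ N)⁆ := rfl
  rw [h3]
  exact h2

section

variable (p : ℕ) {G : Type*} [Group G] [TopologicalSpace G] [IsTopologicalGroup G]
  [CompactSpace G] [T2Space G] [TotallyDisconnectedSpace G]

/-- `g` is a `p`-element of the profinite group `G`: its image in every quotient by
an open normal subgroup has `p`-power order. -/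
def IsPElementPro (g : G) : Prop :=
  ∀ (N : Subgroup G) [N.Normal], IsOpen (N : Set G) →
    ∃ k : ℕ, orderOf (QuotientGroup.mk g : G ⧸ N) = p ^ k

/-- `O_p(M)` for a subgroup `M` of the profinite group `G`: the largest closed
subgroup of `M`, normal in `M`, which is pro-`p` (i.e. has `p`-group image in every
quotient of `G` by an open normal subgroup). -/
def proPCore (M : Subgroup G) : Subgroup G :=
  sSup {K : Subgroup G | K ≤ M ∧ IsClosed (K : Set G) ∧
    (∀ m ∈ M, ∀ k ∈ K, m * k * m⁻¹ ∈ K) ∧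
    ∀ (N : Subgroup G) [N.Normal], IsOpen (N : Set G) →
      IsPGroup p (K.map (QuotientGroup.mk' N))}

/-- Let `G` be a profinite group, `g` a `p`-element of `G` and `M` an
open normal prosolvable subgroup of `G` containing `g`. If `g` centralizes all chief
factors of `M` of order coprime to `p` (above any open normal subgroup of `G`), then
`g ∈ O_p(M)`; in particular `g` has finite order modulo `O_p(G)`. -/
theorem stmt11 (hp : p.Prime) (g : G) (hg : IsPElementPro p g)
    (M : Subgroup G) [M.Normal] (hMopen : IsOpen (M : Set G))
    (hMsolv : ∀ (N : Subgroup G) [N.Normal], IsOpen (N : Set G) →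
      IsSolvable (M.map (QuotientGroup.mk' N)))
    (hgM : g ∈ M)
    (hcent : ∀ X Y : Subgroup G, Y ≤ X → X ≤ M → IsOpen (Y : Set G) →
      -- `X` and `Y` are normal in `M`
      (∀ m ∈ M, ∀ x ∈ X, m * x * m⁻¹ ∈ X) →
      (∀ m ∈ M, ∀ y ∈ Y, m * y * m⁻¹ ∈ Y) →
      Y ≠ X →
      -- `X/Y` is a chief factor of (a finite quotient of) `M` …
      (∀ K : Subgroup G, Y ≤ K → K ≤ X →
        (∀ m ∈ M, ∀ k ∈ K, m * k * m⁻¹ ∈ K) → K = Y ∨ K = X) →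
      -- … of order coprime to `p`
      Nat.Coprime (Y.relIndex X) p →
      -- then `g` centralizes `X/Y`
      ∀ x ∈ X, ⁅g, x⁆ ∈ Y) :
    g ∈ proPCore p M ∧
      ∃ m : ℕ, 0 < m ∧ g ^ m ∈ proPCore p (⊤ : Subgroup G) := by
  classical
  set K := (Subgroup.normalClosure ({g} : Set G)).topologicalClosure with hKdef
  haveI : (Subgroup.normalClosure ({g} : Set G)).Normal := Subgroup.normalClosure_normal
  haveI hKnormal : K.Normal := Subgroup.is_normal_topologicalClosure _
  have hgK : g ∈ K :=
    Subgroup.le_topologicalClosure _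
      (Subgroup.subset_normalClosure (Set.mem_singleton g))
  have hKM : K ≤ M :=
    Subgroup.topologicalClosure_minimal _
      (Subgroup.normalClosure_le_normal (Set.singleton_subset_iff.mpr hgM))
      (M.isClosed_of_isOpen hMopen)
  have hKclosed : IsClosed (K : Set G) := Subgroup.isClosed_topologicalClosure _
  have hKp : ∀ (N : Subgroup G) [N.Normal], IsOpen (N : Set G) →
      IsPGroup p (K.map (QuotientGroup.mk' N)) := by
    intro N₀ hN₀n hN₀open
    set N := N₀ ⊓ M with hNdef
    haveI hNnorm : N.Normal := inferInstance
    have hNopen : IsOpen (N : Set G) := by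
      rw [hNdef, Subgroup.coe_inf]
      exact hN₀open.inter hMopen
    have hNM : N ≤ M := inf_le_right
    haveI hfin : Finite (G ⧸ N) := N.quotient_finite_of_isOpen hNopen
    set φ := QuotientGroup.mk' N with hφ
    set Mb := M.map φ with hMbdef
    haveI hMbn : Mb.Normal := Subgroup.Normal.map ‹M.Normal› φ (QuotientGroup.mk'_surjective N)
    haveI : IsSolvable ↥Mb := hMsolv N hNopen
    set g₀ : ↥Mb := ⟨φ g, Subgroup.mem_map_of_mem φ hgM⟩ with hg₀def
    have hg₀ord : ∃ k, orderOf g₀ = p ^ k := by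
      obtain ⟨k, hk⟩ := hg N hNopen
      refine ⟨k, ?_⟩
      rw [← hk]
      exact (orderOf_injective Mb.subtype (Subgroup.subtype_injective Mb) g₀).symm
    have hcI : HCent p g₀ := transfer_hcent hgM hcent N hNopen hNM
    have hgOp : g₀ ∈ pOp p ↥Mb :=
      finMain hp (Nat.card ↥Mb) (↥Mb) g₀ le_rfl (hMsolv N hNopen) hg₀ord hcI
    set W := (pOp p ↥Mb).map Mb.subtype with hWdef
    have hWp : IsPGroup p ↥W := (pOp_isPGroup p ↥Mb).map _
    have hWn : W.Normal := by
      constructor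
      intro w hw c
      obtain ⟨y, hy, rfl⟩ := hw
      have h2 : (MulAut.conjNormal c y) ∈ pOp p ↥Mb :=
        pOp_map_le p (MulAut.conjNormal c) (Subgroup.mem_map_of_mem _ hy)
      have h3 : (↑(MulAut.conjNormal c y) : G ⧸ N) = c * ↑y * c⁻¹ :=
        MulAut.conjNormal_apply c y
      show c * (y : G ⧸ N) * c⁻¹ ∈ W
      rw [← h3]
      exact Subgroup.mem_map_of_mem _ h2
    set W' := W.comap φ with hW'def
    have hgW' : g ∈ W' := by
      show φ g ∈ W
      exact Subgroup.mem_map_of_mem _ hgOp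
    haveI hW'n : W'.Normal := hWn.comap φ
    have hNW' : N ≤ W' := by
      intro v hv
      show φ v ∈ W
      have h1 : φ v = 1 := by
        rw [← QuotientGroup.ker_mk' N] at hv; exact hv
      rw [h1]; exact one_mem _
    have hW'open : IsOpen (W' : Set G) := Subgroup.isOpen_mono hNW' hNopen
    have hKW' : K ≤ W' :=
      Subgroup.topologicalClosure_minimal _
        (Subgroup.normalClosure_le_normal (Set.singleton_subset_iff.mpr hgW'))
        (W'.isClosed_of_isOpen hW'open)
    have hmapN : IsPGroup p ↥(K.map φ) :=
      IsPGroup.to_le hWp (le_trans (map_mono hKW') (map_comap_le φ W))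
    have hNN₀ : N ≤ N₀ := inf_le_left
    have hNle : N ≤ N₀.comap (MonoidHom.id G) := by simpa using hNN₀
    set ψ := QuotientGroup.map N N₀ (MonoidHom.id G) hNle with hψdef
    have hcomp : (QuotientGroup.mk' N₀) = ψ.comp φ := by
      ext x
      simp [hψdef, hφ]
    rw [hcomp, ← Subgroup.map_map]
    exact hmapN.map ψ
  constructor
  · have hKmem : K ∈ {K : Subgroup G | K ≤ M ∧ IsClosed (K : Set G) ∧
        (∀ m ∈ M, ∀ k ∈ K, m * k * m⁻¹ ∈ K) ∧
        ∀ (N : Subgroup G) [N.Normal], IsOpen (N : Set G) →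
          IsPGroup p (K.map (QuotientGroup.mk' N))} :=
      ⟨hKM, hKclosed, fun m _ k hk => hKnormal.conj_mem k hk m, hKp⟩
    exact le_sSup hKmem hgK
  · refine ⟨1, one_pos, ?_⟩
    rw [pow_one]
    have hKmem : K ∈ {K : Subgroup G | K ≤ (⊤ : Subgroup G) ∧ IsClosed (K : Set G) ∧
        (∀ m ∈ (⊤ : Subgroup G), ∀ k ∈ K, m * k * m⁻¹ ∈ K) ∧
        ∀ (N : Subgroup G) [N.Normal], IsOpen (N : Set G) →
          IsPGroup p (K.map (QuotientGroup.mk' N))} :=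
      ⟨le_top, hKclosed, fun m _ k hk => hKnormal.conj_mem k hk m, hKp⟩
    exact le_sSup hKmem hgK

end
end

section
/- Let X be a finite group with a normal subgroup S of index 2 such that every element of X ∖ S is a 2-element, let a ∈ X ∖ S, let n = 2^t, σ = (1,2,…,n) ∈ S_n, and let g = (a,1,…,1)σ in the wreath product X ≀ ⟨σ⟩. Let Y = S^n⟨g⟩ ≤ X ≀ ⟨σ⟩. Then every element of Y ∖ S^n is a 2-element, hence the proportion of 2-elements in Y is at least (2^{t+1} − 1)/2^{t+1}. -/
section

variable (n : ℕ) (X : Type*) [Group X]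

/-- The cyclic-shift automorphism of `X^n` (coordinates indexed by `ZMod n`). -/
def shiftAut (c : ZMod n) : MulAut (ZMod n → X) where
  toFun f i := f (i + c)
  invFun f i := f (i - c)
  left_inv f := funext fun i => by simp
  right_inv f := funext fun i => by simp
  map_mul' f g := rfl

/-- The action of the cyclic group `C_n` on `X^n` by cyclic shifts, defining the
wreath product `X ≀ C_n = X^n ⋊ C_n`. -/
def shiftHom : Multiplicative (ZMod n) →* MulAut (ZMod n → X) where
  toFun c := shiftAut n X c.toAdd
  map_one' := by
    refine MulEquiv.ext fun f => funext fun i => ?_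
    simp [shiftAut]
  map_mul' a b := by
    refine MulEquiv.ext fun f => funext fun i => ?_
    simp [shiftAut, add_assoc]

private lemma wreath_pow {n : ℕ} {Q : Type*} [CommGroup Q]
    (x : (ZMod n → Q) ⋊[shiftHom n Q] Multiplicative (ZMod n)) (m : ℕ) :
    x ^ m = ⟨fun i => ∏ j ∈ Finset.range m, x.left (i + j • Multiplicative.toAdd x.right),
      x.right ^ m⟩ := by
  induction m with
  | zero => refine SemidirectProduct.ext ?_ (by simp); funext i; simp
  | succ m ih =>
    rw [pow_succ, ih]
    refine SemidirectProduct.ext ?_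
      (by rw [SemidirectProduct.mul_right]; rw [← pow_succ])
    funext i
    show (∏ j ∈ Finset.range m, x.left (i + j • Multiplicative.toAdd x.right)) *
        x.left (i + Multiplicative.toAdd (x.right ^ m)) =
      ∏ j ∈ Finset.range (m + 1), x.left (i + j • Multiplicative.toAdd x.right)
    rw [Finset.prod_range_succ, toAdd_pow]

private lemma hpow_aux {n : ℕ} [NeZero n] {Q : Type*} [CommGroup Q] (u : Q) :
    (⟨fun i => if i = 0 then u else 1, Multiplicative.ofAdd 1⟩ :
      (ZMod n → Q) ⋊[shiftHom n Q] Multiplicative (ZMod n)) ^ n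
      = SemidirectProduct.inl (fun _ => u) := by
  rw [wreath_pow]
  refine SemidirectProduct.ext ?_ ?_
  · funext i
    have h1 : ∀ j : ℕ, (j • Multiplicative.toAdd (Multiplicative.ofAdd (1 : ZMod n)))
        = (j : ZMod n) := by
      intro j; rw [toAdd_ofAdd, nsmul_eq_mul, mul_one]
    show (∏ j ∈ Finset.range n,
        if i + j • Multiplicative.toAdd (Multiplicative.ofAdd (1 : ZMod n)) = 0 then u else 1) = u
    rw [Finset.prod_eq_single_of_mem ((-i).val)
        (Finset.mem_range.mpr (ZMod.val_lt _)) ?_]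
    · rw [h1, ZMod.natCast_zmod_val, add_neg_cancel, if_pos rfl]
    · intro j hj hne
      rw [h1, if_neg]
      intro h0
      apply hne
      have : (j : ZMod n) = -i := eq_neg_of_add_eq_zero_right h0
      rw [← this, ZMod.val_cast_of_lt (Finset.mem_range.mp hj)]
  · show Multiplicative.ofAdd (1 : ZMod n) ^ n = 1
    rw [← ofAdd_nsmul, nsmul_eq_mul, mul_one, ZMod.natCast_self, ofAdd_zero]
/-- Let `X` be a finite group with a normal subgroup `S` of index 2 such
that every element of `X ∖ S` is a 2-element, `a ∈ X ∖ S`, `n = 2^t`, and let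
`g = (a,1,…,1)σ` in the wreath product `X ≀ ⟨σ⟩` (σ an `n`-cycle). Let `Y = S^n⟨g⟩`.
Then every element of `Y ∖ S^n` is a 2-element, and the proportion of 2-elements of
`Y` is at least `(2^{t+1} - 1)/2^{t+1}`. -/
theorem stmt16 [Finite X] (S : Subgroup X) [S.Normal] (hidx : S.index = 2)
    (h2 : ∀ x : X, x ∉ S → ∃ k : ℕ, orderOf x = 2 ^ k)
    (a : X) (ha : a ∉ S) (t : ℕ)
    -- the element `g = (a,1,…,1)σ` of the wreath product `W = X^n ⋊ C_n`, `n = 2^t`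
    (g : (ZMod (2 ^ t) → X) ⋊[shiftHom (2 ^ t) X] Multiplicative (ZMod (2 ^ t)))
    (hg : g = ⟨fun i => if i = 0 then a else 1, Multiplicative.ofAdd 1⟩)
    -- the base subgroup `S^n` and `Y = S^n⟨g⟩`
    (Sn Y : Subgroup ((ZMod (2 ^ t) → X) ⋊[shiftHom (2 ^ t) X]
      Multiplicative (ZMod (2 ^ t))))
    (hSn : Sn = Subgroup.map SemidirectProduct.inl (Subgroup.pi Set.univ fun _ => S))
    (hY : Y = Sn ⊔ Subgroup.zpowers g) :
    (∀ y ∈ Y, y ∉ Sn → ∃ k : ℕ, orderOf y = 2 ^ k) ∧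
      ((2 : ℚ) ^ (t + 1) - 1) / (2 : ℚ) ^ (t + 1) ≤
        (Nat.card {y : Y // ∃ k : ℕ, orderOf y = 2 ^ k} : ℚ) / Nat.card Y := by
  classical
  haveI : NeZero (2 ^ t) := ⟨pow_ne_zero t two_ne_zero⟩
  -- the sign homomorphism
  have hmul : ∀ x y : X, (if x * y ∈ S then (1 : ℤˣ) else -1)
      = (if x ∈ S then (1 : ℤˣ) else -1) * (if y ∈ S then 1 else -1) := by
    intro x y
    have hxy := Subgroup.mul_mem_iff_of_index_two hidx (a := x) (b := y)
    by_cases hx : x ∈ S <;> by_cases hy : y ∈ S <;> simp [hx, hy, hxy]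
  let q : X →* ℤˣ :=
    { toFun := fun x => if x ∈ S then 1 else -1,
      map_one' := if_pos S.one_mem,
      map_mul' := hmul }
  have hq1 : ∀ x : X, q x = 1 ↔ x ∈ S := by
    intro x; by_cases hx : x ∈ S <;> simp [q, hx]
  have hqa : q a = -1 := if_neg ha
  -- the quotient wreath product map
  have hcompat : ∀ c : Multiplicative (ZMod (2 ^ t)),
      (q.compLeft (ZMod (2 ^ t))).comp ((shiftHom (2 ^ t) X c).toMonoidHom)
        = ((shiftHom (2 ^ t) ℤˣ c).toMonoidHom).comp (q.compLeft (ZMod (2 ^ t))) := by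
    intro c; rfl
  let Θ := SemidirectProduct.map (q.compLeft (ZMod (2 ^ t))) (MonoidHom.id _) hcompat
  let h : (ZMod (2 ^ t) → ℤˣ) ⋊[shiftHom (2 ^ t) ℤˣ] Multiplicative (ZMod (2 ^ t)) :=
    ⟨fun i => if i = 0 then -1 else 1, Multiplicative.ofAdd 1⟩
  have hΘg : Θ g = h := by
    rw [hg]
    refine SemidirectProduct.ext ?_ rfl
    funext i
    show q (if i = 0 then a else 1) = if i = 0 then -1 else 1
    split_ifs with hi
    · exact hqa
    · exact q.map_one
  have hmemSn : ∀ w, w ∈ Sn ↔ (w.right = 1 ∧ ∀ i, w.left i ∈ S) := by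
    intro w
    rw [hSn]
    constructor
    · rintro ⟨f, hf, rfl⟩
      exact ⟨rfl, fun i => (Subgroup.mem_pi Set.univ).mp hf i (Set.mem_univ i)⟩
    · rintro ⟨hr, hl⟩
      exact ⟨w.left, (Subgroup.mem_pi Set.univ).mpr fun i _ => hl i,
        SemidirectProduct.ext rfl hr.symm⟩
  have hSnker : ∀ w, Θ w = 1 ↔ w ∈ Sn := by
    intro w
    rw [hmemSn]
    constructor
    · intro hw
      refine ⟨congrArg SemidirectProduct.right hw, fun i => (hq1 _).mp ?_⟩
      exact congrFun (congrArg SemidirectProduct.left hw) i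
    · rintro ⟨hr, hl⟩
      refine SemidirectProduct.ext ?_ hr
      funext i; exact (hq1 _).mpr (hl i)
  have hYmap : Subgroup.map Θ Y = Subgroup.zpowers h := by
    rw [hY, Subgroup.map_sup, MonoidHom.map_zpowers, hΘg,
      show Subgroup.map Θ Sn = ⊥ from (Subgroup.map_eq_bot_iff _).mpr
        (fun w hw => MonoidHom.mem_ker.mpr ((hSnker w).mpr hw)), bot_sup_eq]
  have hpow2t : h ^ (2 ^ t) = SemidirectProduct.inl (fun _ => (-1 : ℤˣ)) := hpow_aux (-1)
  -- the key computation
  have hqpow : ∀ (y : (ZMod (2 ^ t) → X) ⋊[shiftHom (2 ^ t) X] Multiplicative (ZMod (2 ^ t)))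
      (k : ℤ), h ^ k = Θ y → ∀ (r : ℕ) (e : ℤ), k * (r : ℤ) = ((2 ^ t : ℕ) : ℤ) * e →
      y.right ^ r = 1 → ∀ i, q ((y ^ r).left i) = (-1) ^ e := by
    intro y k hk r e hke hyr i
    have h1 : y ^ r = SemidirectProduct.inl ((y ^ r).left) := by
      refine SemidirectProduct.ext rfl ?_
      show (y ^ r).right = 1
      exact (map_pow SemidirectProduct.rightHom y r).trans hyr
    have h2a : Θ (y ^ r) = SemidirectProduct.inl (fun i => q ((y ^ r).left i)) := by
      conv_lhs => rw [h1]
      exact SemidirectProduct.map_inl _ _ _ _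
    have h3 : Θ (y ^ r) = SemidirectProduct.inl (fun _ => (-1 : ℤˣ) ^ e) := by
      rw [map_pow, ← hk, ← zpow_natCast (h ^ k) r, ← zpow_mul, hke, zpow_mul,
        zpow_natCast, hpow2t, ← map_zpow]
      rfl
    have := SemidirectProduct.inl_injective (h2a.symm.trans h3)
    exact congrFun this i
  -- part 1
  have part1 : ∀ y ∈ Y, y ∉ Sn → ∃ k : ℕ, orderOf y = 2 ^ k := by
    intro y hy hySn
    obtain ⟨k, hk⟩ := Subgroup.mem_zpowers_iff.mp (hYmap ▸ Subgroup.mem_map_of_mem Θ hy)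
    have hcr : Multiplicative.toAdd y.right = ((k : ℤ) : ZMod (2 ^ t)) := by
      have h4 := congrArg SemidirectProduct.right hk
      have h5 : (h ^ k).right = Multiplicative.ofAdd ((k : ℤ) : ZMod (2 ^ t)) := by
        have : (h ^ k).right = h.right ^ k := map_zpow SemidirectProduct.rightHom h k
        rw [this]
        show Multiplicative.ofAdd (1 : ZMod (2 ^ t)) ^ k = _
        rw [← ofAdd_zsmul, zsmul_eq_mul, mul_one]
      have h6 : (Θ y).right = y.right := rfl
      rw [h5, h6] at h4
      rw [← h4]
      rfl
    have main : ∃ r : ℕ, r ∣ 2 ^ t ∧ y.right ^ r = 1 ∧ ∀ i, (y ^ r).left i ∉ S := by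
      by_cases hc0 : Multiplicative.toAdd y.right = 0
      · obtain ⟨e, he⟩ : ((2 ^ t : ℕ) : ℤ) ∣ k := by
          rw [hc0] at hcr
          exact (ZMod.intCast_zmod_eq_zero_iff_dvd k (2 ^ t)).mp hcr.symm
        have hyright : y.right = 1 := by
          rw [← ofAdd_toAdd y.right, hc0, ofAdd_zero]
        have hyr1 : y.right ^ 1 = 1 := by rw [pow_one, hyright]
        have hq := hqpow y k hk 1 e (by rw [he]; push_cast; ring) hyr1
        rw [pow_one] at hq
        have hex : ∃ i₀, y.left i₀ ∉ S := by
          by_contra hall; push_neg at hall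
          exact hySn ((hmemSn y).mpr ⟨hyright, hall⟩)
        obtain ⟨i₀, hi₀⟩ := hex
        have hne : ((-1 : ℤˣ)) ^ e ≠ 1 := by
          rw [← hq i₀]
          exact fun hmem => hi₀ ((hq1 _).mp hmem)
        refine ⟨1, one_dvd _, hyr1, fun i hmem => hne ?_⟩
        rw [pow_one] at hmem
        rw [← hq i]
        exact (hq1 _).mpr hmem
      · set c : ZMod (2 ^ t) := Multiplicative.toAdd y.right with hc
        have hcval : c.val ≠ 0 := fun h0 => hc0 (by rwa [← ZMod.val_eq_zero])
        set v := (c.val).factorization 2 with hv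
        set w := c.val / 2 ^ v with hwdef
        have hw : 2 ^ v * w = c.val := Nat.mul_div_cancel' (Nat.ordProj_dvd _ _)
        have hwodd : ¬ 2 ∣ w := Nat.not_dvd_ordCompl Nat.prime_two hcval
        have hvt : v < t := by
          by_contra hle; push_neg at hle
          have h1 : (2 : ℕ) ^ t ≤ 2 ^ v := Nat.pow_le_pow_right (by norm_num) hle
          have h2' : 2 ^ v ≤ c.val := Nat.le_of_dvd (Nat.pos_of_ne_zero hcval)
            (Nat.ordProj_dvd _ _)
          have h3' := ZMod.val_lt c
          omega
        have h2tsplit : (2 : ℕ) ^ (t - v) * 2 ^ v = 2 ^ t := by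
          rw [← pow_add]; congr 1; omega
        have hyr : y.right ^ (2 ^ (t - v)) = 1 := by
          have hcast : ((2 ^ (t - v) * c.val : ℕ) : ZMod (2 ^ t)) = 0 := by
            rw [ZMod.natCast_eq_zero_iff]
            have hdd : 2 ^ (t - v) * 2 ^ v ∣ 2 ^ (t - v) * c.val :=
              Nat.mul_dvd_mul_left _ (Nat.ordProj_dvd _ _)
            rwa [h2tsplit] at hdd
          have hsm : (2 ^ (t - v)) • c = 0 := by
            push_cast at hcast
            rw [ZMod.natCast_zmod_val c] at hcast
            rw [nsmul_eq_mul]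
            push_cast
            exact hcast
          rw [← ofAdd_toAdd y.right, ← hc, ← ofAdd_nsmul, hsm, ofAdd_zero]
        obtain ⟨m, hm⟩ : ((2 ^ t : ℕ) : ℤ) ∣ (k - c.val) := by
          rw [← ZMod.intCast_zmod_eq_zero_iff_dvd]
          push_cast
          rw [← hcr, ZMod.natCast_zmod_val c]
          ring
        have hwc : (c.val : ℤ) = 2 ^ v * (w : ℤ) := by exact_mod_cast hw.symm
        have hk' : k = 2 ^ v * (w : ℤ) + 2 ^ t * m := by
          have hmm : k - (c.val : ℤ) = ((2 ^ t : ℕ) : ℤ) * m := hm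
          push_cast at hmm
          linarith [hwc, hmm]
        set e : ℤ := (w : ℤ) + 2 ^ (t - v) * m with hedef
        have h2tz : (2 : ℤ) ^ v * 2 ^ (t - v) = 2 ^ t := by
          rw [← pow_add]; congr 1; omega
        have hke : k * ((2 ^ (t - v) : ℕ) : ℤ) = ((2 ^ t : ℕ) : ℤ) * e := by
          rw [hedef]
          push_cast
          linear_combination (2 : ℤ) ^ (t - v) * hk' + (w : ℤ) * h2tz
        have hq := hqpow y k hk (2 ^ (t - v)) e hke hyr
        have heodd : Odd e := by
          have hwo : Odd (w : ℤ) := by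
            rw [Int.odd_coe_nat]
            rw [Nat.odd_iff]
            omega
          refine hwo.add_even ?_
          have : (2 : ℤ) ∣ 2 ^ (t - v) * m := by
            refine dvd_mul_of_dvd_left (dvd_pow_self 2 ?_) m
            omega
          exact even_iff_two_dvd.mpr this
        have hne : ((-1 : ℤˣ)) ^ e = -1 := by
          obtain ⟨m', hm'⟩ := heodd
          have hsq : ((-1 : ℤˣ)) ^ (2 : ℤ) = 1 := by
            rw [show (2 : ℤ) = ((2 : ℕ) : ℤ) from rfl, zpow_natCast, Int.units_sq]
          rw [hm', zpow_add, zpow_mul, hsq, one_zpow, zpow_one, one_mul]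
        refine ⟨2 ^ (t - v), pow_dvd_pow 2 (Nat.sub_le t v), hyr, fun i hmem => ?_⟩
        have := (hq1 _).mpr hmem
        rw [hq i, hne] at this
        exact absurd this (by decide)
    obtain ⟨r, hrdvd, hyr, hF⟩ := main
    have hinl : y ^ r = SemidirectProduct.inl ((y ^ r).left) := by
      refine SemidirectProduct.ext rfl ?_
      show (y ^ r).right = 1
      exact (map_pow SemidirectProduct.rightHom y r).trans hyr
    have hpow1 : y ^ (r * 2 ^ Nat.card X) = 1 := by
      rw [pow_mul, hinl, ← map_pow]
      have : ((y ^ r).left) ^ (2 ^ Nat.card X) = 1 := by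
        funext i
        show (y ^ r).left i ^ 2 ^ Nat.card X = 1
        obtain ⟨ki, hki⟩ := h2 _ (hF i)
        have hdvd : orderOf ((y ^ r).left i) ∣ 2 ^ Nat.card X := by
          rw [hki]
          refine pow_dvd_pow 2 ?_
          have hd1 : (2 : ℕ) ^ ki ∣ Nat.card X := hki ▸ orderOf_dvd_natCard _
          have hd2 : (2 : ℕ) ^ ki ≤ Nat.card X := Nat.le_of_dvd Nat.card_pos hd1
          have hd3 : ki < 2 ^ ki := Nat.lt_two_pow_self
          omega
        exact orderOf_dvd_iff_pow_eq_one.mp hdvd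
      rw [this, map_one]
    have hdvd2 : orderOf y ∣ 2 ^ (t + Nat.card X) := by
      refine dvd_trans (orderOf_dvd_of_pow_eq_one hpow1) ?_
      rw [pow_add]
      exact mul_dvd_mul hrdvd dvd_rfl
    obtain ⟨j, _, hj⟩ := (Nat.dvd_prime_pow Nat.prime_two).mp hdvd2
    exact ⟨j, hj⟩
  refine ⟨part1, ?_⟩
  -- Part 2: counting
  haveI : Finite ((ZMod (2 ^ t) → X) ⋊[shiftHom (2 ^ t) X] Multiplicative (ZMod (2 ^ t))) :=
    Finite.of_injective (fun x => (x.left, x.right))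
      (fun a' b' hab => SemidirectProduct.ext (congrArg Prod.fst hab) (congrArg Prod.snd hab))
  let φ := Θ.comp Y.subtype
  have hkerφ : φ.ker = Sn.subgroupOf Y := by
    ext x
    rw [MonoidHom.mem_ker, Subgroup.mem_subgroupOf]
    exact hSnker _
  have hrange : φ.range = Subgroup.zpowers h := by
    rw [MonoidHom.range_comp, Subgroup.range_subtype, hYmap]
  have horder : orderOf h = 2 ^ (t + 1) := by
    have hne : h ^ (2 ^ t) ≠ 1 := by
      rw [hpow2t]
      intro hcon
      have h0 : (-1 : ℤˣ) = 1 := congrFun (congrArg SemidirectProduct.left hcon) 0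
      exact absurd h0 (by decide)
    have h1 : h ^ (2 ^ (t + 1)) = 1 := by
      rw [pow_succ, pow_mul, hpow2t, ← map_pow]
      have : (fun (_ : ZMod (2 ^ t)) => (-1 : ℤˣ)) ^ 2 = 1 := by
        funext i
        show (-1 : ℤˣ) ^ 2 = 1
        decide
      rw [this, map_one]
    obtain ⟨j, hj, hoj⟩ := (Nat.dvd_prime_pow Nat.prime_two).mp (orderOf_dvd_of_pow_eq_one h1)
    have hjt : j = t + 1 := by
      by_contra hne'
      have hjle : j ≤ t := by omega
      exact hne (orderOf_dvd_iff_pow_eq_one.mp (hoj ▸ pow_dvd_pow 2 hjle))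
    rw [hoj, hjt]
  have hcardY : Nat.card Y = 2 ^ (t + 1) * Nat.card (Sn.subgroupOf Y) :=
    calc Nat.card Y = Nat.card (↥Y ⧸ φ.ker) * Nat.card φ.ker :=
          Subgroup.card_eq_card_quotient_mul_card_subgroup φ.ker
    _ = Nat.card φ.range * Nat.card φ.ker := by
          rw [Nat.card_congr (QuotientGroup.quotientKerEquivRange φ).toEquiv]
    _ = 2 ^ (t + 1) * Nat.card (Sn.subgroupOf Y) := by
          rw [hrange, hkerφ, Nat.card_zpowers, horder]
  set M := Nat.card (Sn.subgroupOf Y) with hM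
  set A := Nat.card {y : Y // ∃ k : ℕ, orderOf y = 2 ^ k} with hA
  have hsub : Nat.card {y : Y // ¬ ∃ k : ℕ, orderOf y = 2 ^ k} ≤ M := by
    have hmem : ∀ z : {y : Y // ¬ ∃ k : ℕ, orderOf y = 2 ^ k}, (z.1.1 ∈ Sn) := by
      intro z
      by_contra hnot
      apply z.2
      obtain ⟨k, hk⟩ := part1 z.1.1 z.1.2 hnot
      exact ⟨k, ((orderOf_injective Y.subtype (Subgroup.subtype_injective Y) z.1).symm).trans hk⟩
    exact Nat.card_le_card_of_injective
      (fun z => (⟨z.1, Subgroup.mem_subgroupOf.mpr (hmem z)⟩ : Sn.subgroupOf Y))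
      (fun z1 z2 hz => by
        apply Subtype.ext
        exact congrArg (Subtype.val : Sn.subgroupOf Y → ↥Y) hz)
  have hcompl : A + Nat.card {y : Y // ¬ ∃ k : ℕ, orderOf y = 2 ^ k} = Nat.card Y := by
    haveI : Fintype ↥Y := Fintype.ofFinite _
    classical
    rw [hA, Nat.card_eq_fintype_card, Nat.card_eq_fintype_card, Nat.card_eq_fintype_card,
      Fintype.card_subtype_compl]
    have hle : Fintype.card {y : Y // ∃ k : ℕ, orderOf y = 2 ^ k} ≤ Fintype.card ↥Y :=
      Fintype.card_subtype_le _
    omega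
  have hMpos : 0 < M := Nat.card_pos
  have hYpos : 0 < Nat.card Y := Nat.card_pos
  have hMle : M ≤ Nat.card Y := by
    rw [hcardY]; nlinarith [Nat.one_le_two_pow (n := t + 1)]
  have hAge : Nat.card Y - M ≤ A := by omega
  -- rational arithmetic
  have hT : (0 : ℚ) < 2 ^ (t + 1) := by positivity
  rw [div_le_div_iff₀ hT (by exact_mod_cast hYpos)]
  have hAq : (Nat.card Y : ℚ) - M ≤ A := by
    have := Nat.cast_le (α := ℚ) |>.mpr hAge
    rw [Nat.cast_sub hMle] at this
    exact this
  have hcard' : (Nat.card Y : ℚ) = 2 ^ (t + 1) * M := by exact_mod_cast hcardY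
  nlinarith [hAq, hcard', hT, mul_le_mul_of_nonneg_left hAq (le_of_lt hT)]

end
end

section
/- Let G be a profinite group with a chain of open normal subgroups G ≥ N₁ > M₁ ≥ N₂ > M₂ ≥ … with ∩ M_t = 1, and suppose there is ε > 0 such that for every t and every 2-element x of G one can find a 2-element z ∈ x N_{t+1} with P₂(zM_{t+1}, G/M_{t+1}) ≤ (1−ε) P₂(xN_{t+1}, G/N_{t+1}). Then there exists a 2-element g of G with P₂(g,G) = 0, where P₂(g,G) = μ({y ∈ G : ⟨g,y⟩ is a pro-2 group}). -/
open MeasureTheory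

section

variable {G : Type*} [Group G] [TopologicalSpace G] [IsTopologicalGroup G]
  [CompactSpace G] [T2Space G] [TotallyDisconnectedSpace G]

/-- `g` is a `2`-element of the profinite group `G`. -/
def Is2ElementPro (g : G) : Prop :=
  ∀ (N : Subgroup G) [N.Normal], IsOpen (N : Set G) →
    ∃ k : ℕ, orderOf (QuotientGroup.mk g : G ⧸ N) = 2 ^ k

/-- A closed subgroup `K` of the profinite group `G` is pro-`2` if its image in every
quotient by an open normal subgroup is a `2`-group. -/
def IsPro2Subgroup (K : Subgroup G) : Prop :=
  IsClosed (K : Set G) ∧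
    ∀ (N : Subgroup G) [N.Normal], IsOpen (N : Set G) →
      IsPGroup 2 (K.map (QuotientGroup.mk' N))

/-- `P₂(xK, G/K)`: the proportion of elements `y` of the quotient `G/K` such that
`⟨xK, y⟩` is a `2`-group. -/
noncomputable def probGen2 (K : Subgroup G) (hK : K.Normal) (x : G) : ℝ :=
  letI := hK
  (Nat.card {y : G ⧸ K //
      IsPGroup 2 (Subgroup.closure {(QuotientGroup.mk x : G ⧸ K), y})} : ℝ) /
    Nat.card (G ⧸ K)

set_option linter.unusedSectionVars false in
/-- probGen2 is nonnegative. -/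
lemma probGen2_nonneg (K : Subgroup G) (hKn : K.Normal) (x : G) :
    0 ≤ probGen2 K hKn x :=
  div_nonneg (Nat.cast_nonneg _) (Nat.cast_nonneg _)

set_option linter.unusedSectionVars false in
/-- probGen2 is at most one. -/
lemma probGen2_le_one (K : Subgroup G) (hKn : K.Normal) (hK : IsOpen (K : Set G)) (x : G) :
    probGen2 K hKn x ≤ 1 := by
  haveI := hKn
  haveI : Finite (G ⧸ K) := K.quotient_finite_of_isOpen hK
  haveI : Nonempty (G ⧸ K) := ⟨1⟩
  apply div_le_one_of_le₀
  · exact_mod_cast Finite.card_subtype_le _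
  · positivity

set_option linter.unusedSectionVars false in
/-- probGen2 only depends on the image of `x` in the quotient. -/
lemma probGen2_congr (K : Subgroup G) (hKn : K.Normal) {x x' : G}
    (h : letI := hKn; (QuotientGroup.mk x : G ⧸ K) = QuotientGroup.mk x') :
    probGen2 K hKn x = probGen2 K hKn x' := by
  unfold probGen2
  rw [h]

set_option linter.unusedSectionVars false in
lemma probGen2_set_mono (K L : Subgroup G) (hKn : K.Normal) (hLn : L.Normal)
    (h : K ≤ L) (x : G) :
    {y : G | letI := hKn; IsPGroup 2 (Subgroup.closure
        {(QuotientGroup.mk x : G ⧸ K), (QuotientGroup.mk y : G ⧸ K)})} ⊆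
      {y : G | letI := hLn; IsPGroup 2 (Subgroup.closure
        {(QuotientGroup.mk x : G ⧸ L), (QuotientGroup.mk y : G ⧸ L)})} := by
  haveI := hKn; haveI := hLn
  intro y hy
  simp only [Set.mem_setOf_eq] at hy ⊢
  have hle : K ≤ L.comap (MonoidHom.id G) := h
  let φ : G ⧸ K →* G ⧸ L := QuotientGroup.map K L (MonoidHom.id G) hle
  have := hy.map φ
  rwa [MonoidHom.map_closure, Set.image_pair, QuotientGroup.map_mk, QuotientGroup.map_mk] at this

set_option linter.unusedSectionVars false in
lemma haar_preimage [MeasurableSpace G] [BorelSpace G] (K : Subgroup G) (hKn : K.Normal) (hK : IsOpen (K : Set G))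
    (A : Set (G ⧸ K)) :
    (Measure.haar : Measure G) (QuotientGroup.mk ⁻¹' A) =
      (Nat.card A : ENNReal) * (Measure.haar : Measure G) (K : Set G) := by
  haveI := hKn
  haveI : Finite (G ⧸ K) := K.quotient_finite_of_isOpen hK
  have rep : ∀ q : G ⧸ K, ∃ a : G,
      (QuotientGroup.mk ⁻¹' {q} : Set G) = (a * ·) ⁻¹' (K : Set G) := by
    intro q
    obtain ⟨a, rfl⟩ := QuotientGroup.mk_surjective q
    refine ⟨a⁻¹, ?_⟩
    ext y
    simp only [Set.mem_preimage, Set.mem_singleton_iff, QuotientGroup.eq, SetLike.mem_coe]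
    constructor
    · intro h; simpa using K.inv_mem h
    · intro h; simpa using K.inv_mem h
  have hMK : ∀ q : G ⧸ K, MeasurableSet (QuotientGroup.mk ⁻¹' {q} : Set G) ∧
      (Measure.haar : Measure G) (QuotientGroup.mk ⁻¹' {q}) =
        (Measure.haar : Measure G) (K : Set G) := by
    intro q
    obtain ⟨a, ha⟩ := rep q
    rw [ha]
    exact ⟨(hK.preimage (continuous_mul_left a)).measurableSet,
      measure_preimage_mul _ a _⟩
  have hA : A.Finite := Set.toFinite A
  have hun : QuotientGroup.mk ⁻¹' A = ⋃ q ∈ hA.toFinset, (QuotientGroup.mk ⁻¹' {q} : Set G) := by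
    rw [← Set.biUnion_preimage_singleton]
    ext y; simp
  rw [hun, measure_biUnion_finset ?_ (fun q _ => (hMK q).1)]
  · rw [Finset.sum_congr rfl (fun q _ => (hMK q).2), Finset.sum_const, nsmul_eq_mul]
    congr 2
    rw [← Set.ncard_eq_toFinset_card A hA]
    exact (Nat.card_coe_set_eq A).symm
  · intro a _ b _ hab
    exact (Set.disjoint_singleton.mpr hab).preimage _

set_option linter.unusedSectionVars false in
lemma haar_prob [MeasurableSpace G] [BorelSpace G] (K : Subgroup G) (hKn : K.Normal) (hK : IsOpen (K : Set G)) (x : G) :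
    (Measure.haar : Measure G)
        {y : G | letI := hKn; IsPGroup 2 (Subgroup.closure
          {(QuotientGroup.mk x : G ⧸ K), (QuotientGroup.mk y : G ⧸ K)})} =
      ENNReal.ofReal (probGen2 K hKn x) * (Measure.haar : Measure G) Set.univ := by
  haveI := hKn
  haveI : Finite (G ⧸ K) := K.quotient_finite_of_isOpen hK
  haveI : Nonempty (G ⧸ K) := ⟨1⟩
  have hQ0 : (Nat.card (G ⧸ K) : ENNReal) ≠ 0 := by
    simpa using Nat.card_pos.ne'
  have huniv : (Measure.haar : Measure G) Set.univ =
      (Nat.card (G ⧸ K) : ENNReal) * (Measure.haar : Measure G) (K : Set G) := by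
    have := haar_preimage K hKn hK Set.univ
    simpa using this
  set A : Set (G ⧸ K) := {q | IsPGroup 2 (Subgroup.closure {(QuotientGroup.mk x : G ⧸ K), q})}
    with hAdef
  have hset : {y : G | IsPGroup 2 (Subgroup.closure
      {(QuotientGroup.mk x : G ⧸ K), (QuotientGroup.mk y : G ⧸ K)})} =
      QuotientGroup.mk ⁻¹' A := rfl
  have hcard : (Nat.card {y : G ⧸ K //
      IsPGroup 2 (Subgroup.closure {(QuotientGroup.mk x : G ⧸ K), y})} : ℝ) = Nat.card A := rfl
  rw [hset, haar_preimage K hKn hK A, huniv]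
  have : ENNReal.ofReal (probGen2 K hKn x) = (Nat.card A : ENNReal) / (Nat.card (G ⧸ K)) := by
    rw [probGen2, hcard, ENNReal.ofReal_div_of_pos (by exact_mod_cast Nat.card_pos),
      ENNReal.ofReal_natCast, ENNReal.ofReal_natCast]
  rw [this, ← mul_assoc, ENNReal.div_mul_cancel hQ0 (ENNReal.natCast_ne_top _)]

set_option linter.unusedSectionVars false in
lemma probGen2_mono [MeasurableSpace G] [BorelSpace G] (K L : Subgroup G) (hKn : K.Normal) (hLn : L.Normal)
    (hK : IsOpen (K : Set G)) (hL : IsOpen (L : Set G)) (h : K ≤ L) (x : G) :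
    probGen2 K hKn x ≤ probGen2 L hLn x := by
  haveI : Nonempty G := ⟨1⟩
  have hc0 : (Measure.haar : Measure G) Set.univ ≠ 0 :=
    (isOpen_univ.measure_pos _ Set.univ_nonempty).ne'
  have hctop : (Measure.haar : Measure G) Set.univ ≠ ⊤ :=
    (IsCompact.measure_lt_top isCompact_univ).ne
  have hm := measure_mono (μ := (Measure.haar : Measure G)) (probGen2_set_mono K L hKn hLn h x)
  rw [haar_prob K hKn hK x, haar_prob L hLn hL x,
    ENNReal.mul_le_mul_iff_left hc0 hctop] at hm
  exact (ENNReal.ofReal_le_ofReal_iff (probGen2_nonneg L hLn x)).mp hm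

/-- Let `G` be a profinite group with a chain of open normal subgroups
`G ≥ N₁ > M₁ ≥ N₂ > M₂ ≥ …` with `⋂ M_t = 1`, and suppose there is `ε > 0` such that
for every `t` and every `2`-element `x` there is a `2`-element `z ∈ x N_{t+1}` with
`P₂(zM_{t+1}, G/M_{t+1}) ≤ (1-ε) P₂(xN_{t+1}, G/N_{t+1})`. Then there is a `2`-element
`g` of `G` with `P₂(g,G) = 0`. -/
theorem stmt19 [MeasurableSpace G] [BorelSpace G]
    (N M : ℕ → Subgroup G)
    (hNnorm : ∀ t, (N t).Normal) (hMnorm : ∀ t, (M t).Normal)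
    (hNopen : ∀ t, IsOpen (N t : Set G)) (hMopen : ∀ t, IsOpen (M t : Set G))
    (hlt : ∀ t, M t < N t) (hchain : ∀ t, N (t + 1) ≤ M t)
    (hinter : (⨅ t, M t) = ⊥)
    (ε : ℝ) (hε : 0 < ε)
    (hstep : ∀ t : ℕ, ∀ x : G, Is2ElementPro x →
      ∃ z : G, Is2ElementPro z ∧ x⁻¹ * z ∈ N (t + 1) ∧
        probGen2 (M (t + 1)) (hMnorm (t + 1)) z ≤
          (1 - ε) * probGen2 (N (t + 1)) (hNnorm (t + 1)) x) :
    ∃ g : G, Is2ElementPro g ∧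
      (Measure.haar : Measure G)
        {y : G | IsPro2Subgroup ((Subgroup.closure {g, y}).topologicalClosure)} = 0 := by
  classical
  haveI : Nonempty G := ⟨1⟩
  -- the sequence of 2-elements
  have one2 : Is2ElementPro (1 : G) := by
    intro V _ hV
    exact ⟨0, by simp⟩
  choose f h2 hmem hle using hstep
  let gp : ℕ → {x : G // Is2ElementPro x} := fun t =>
    Nat.rec ⟨1, one2⟩ (fun t p => ⟨f t p.1 p.2, h2 t p.1 p.2⟩) t
  have hsucc : ∀ t, gp (t + 1) = ⟨f t (gp t).1 (gp t).2, h2 t (gp t).1 (gp t).2⟩ :=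
    fun t => rfl
  have hgmem : ∀ t, ((gp t).1)⁻¹ * (gp (t + 1)).1 ∈ N (t + 1) := by
    intro t; rw [hsucc t]; exact hmem t _ _
  have hgle : ∀ t, probGen2 (M (t + 1)) (hMnorm (t + 1)) ((gp (t + 1)).1) ≤
      (1 - ε) * probGen2 (N (t + 1)) (hNnorm (t + 1)) ((gp t).1) := by
    intro t; rw [hsucc t]; exact hle t _ _
  -- antitonicity of M
  have hMNle : ∀ t, M (t + 1) ≤ N (t + 1) := fun t => (hlt (t + 1)).le
  have hManti : ∀ t, M (t + 1) ≤ M t := fun t => (hMNle t).trans (hchain t)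
  have hMclosed : ∀ t, IsClosed (M t : Set G) :=
    fun t => Subgroup.isClosed_of_isOpen _ (hMopen t)
  -- the limit element
  let C : ℕ → Set G := fun s => (fun y => ((gp s).1)⁻¹ * y) ⁻¹' (M s : Set G)
  have hCclosed : ∀ s, IsClosed (C s) :=
    fun s => (hMclosed s).preimage (continuous_mul_left _)
  have hCne : ∀ s, (C s).Nonempty := by
    intro s
    refine ⟨(gp s).1, ?_⟩
    show ((gp s).1)⁻¹ * (gp s).1 ∈ (M s : Set G)
    rw [inv_mul_cancel]
    exact one_mem _
  have hCanti : ∀ s, C (s + 1) ⊆ C s := by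
    intro s y hy
    have h1 : ((gp s).1)⁻¹ * y =
        (((gp s).1)⁻¹ * (gp (s + 1)).1) * (((gp (s + 1)).1)⁻¹ * y) := by group
    show ((gp s).1)⁻¹ * y ∈ (M s : Set G)
    rw [h1]
    exact mul_mem ((hchain s) (hgmem s)) (hManti s hy)
  obtain ⟨g, hg⟩ := IsCompact.nonempty_iInter_of_sequence_nonempty_isCompact_isClosed C
    hCanti hCne ((hCclosed 0).isCompact) hCclosed
  have hgC : ∀ s, ((gp s).1)⁻¹ * g ∈ M s := fun s =>
    Set.mem_iInter.mp hg s
  -- M s form a neighborhood basis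
  have hbasis : ∀ V : Subgroup G, IsOpen (V : Set G) → ∃ s, M s ≤ V := by
    intro V hV
    by_contra hcon
    push_neg at hcon
    have hDne : ∀ s, ((M s : Set G) ∩ (V : Set G)ᶜ).Nonempty := by
      intro s
      obtain ⟨y, hy1, hy2⟩ := SetLike.not_le_iff_exists.mp (hcon s)
      exact ⟨y, hy1, hy2⟩
    have hDanti : ∀ s, ((M (s + 1) : Set G) ∩ (V : Set G)ᶜ) ⊆ ((M s : Set G) ∩ (V : Set G)ᶜ) :=
      fun s => Set.inter_subset_inter_left _ (hManti s)
    have hDclosed : ∀ s, IsClosed ((M s : Set G) ∩ (V : Set G)ᶜ) :=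
      fun s => (hMclosed s).inter (isClosed_compl_iff.mpr hV)
    obtain ⟨y, hy⟩ := IsCompact.nonempty_iInter_of_sequence_nonempty_isCompact_isClosed _
      hDanti hDne ((hDclosed 0).isCompact) hDclosed
    have hyM : y ∈ ⋂ s, (M s : Set G) := by
      simp only [Set.mem_iInter] at hy ⊢
      exact fun s => (hy s).1
    have : y = 1 := by
      have hcoe : (⋂ s, (M s : Set G)) = {1} := by
        rw [← Subgroup.coe_iInf, hinter, Subgroup.coe_bot]
      rw [hcoe] at hyM
      exact hyM
    have hy0 := Set.mem_iInter.mp hy 0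
    exact hy0.2 (this ▸ one_mem V)
  -- g is a 2-element
  have hg2 : Is2ElementPro g := by
    intro V inst hV
    obtain ⟨s, hs⟩ := hbasis V hV
    have : (QuotientGroup.mk (gp s).1 : G ⧸ V) = QuotientGroup.mk g :=
      (QuotientGroup.eq).mpr (hs (hgC s))
    rw [← this]
    exact (gp s).2 V hV
  refine ⟨g, hg2, ?_⟩
  -- the probability bound
  set δ : ℝ := max (1 - ε) 0 with hδdef
  have hδ0 : 0 ≤ δ := le_max_right _ _
  have hδ1 : δ < 1 := max_lt (by linarith) one_pos
  have key : ∀ t, probGen2 (M t) (hMnorm t) ((gp t).1) ≤ δ ^ t := by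
    intro t
    induction t with
    | zero => simpa using probGen2_le_one (M 0) (hMnorm 0) (hMopen 0) _
    | succ t ih =>
      calc probGen2 (M (t + 1)) (hMnorm (t + 1)) ((gp (t + 1)).1)
          ≤ (1 - ε) * probGen2 (N (t + 1)) (hNnorm (t + 1)) ((gp t).1) := hgle t
        _ ≤ δ * probGen2 (N (t + 1)) (hNnorm (t + 1)) ((gp t).1) :=
            mul_le_mul_of_nonneg_right (le_max_left _ _) (probGen2_nonneg _ _ _)
        _ ≤ δ * probGen2 (M t) (hMnorm t) ((gp t).1) :=
            mul_le_mul_of_nonneg_left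
              (probGen2_mono (N (t + 1)) (M t) (hNnorm (t + 1)) (hMnorm t)
                (hNopen (t + 1)) (hMopen t) (hchain t) _) hδ0
        _ ≤ δ * δ ^ t := mul_le_mul_of_nonneg_left ih hδ0
        _ = δ ^ (t + 1) := (pow_succ' δ t).symm
  -- the target set is contained in each approximating set
  set S := {y : G | IsPro2Subgroup ((Subgroup.closure {g, y}).topologicalClosure)} with hSdef
  have hsub : ∀ t, S ⊆ {y : G | letI := hMnorm t; IsPGroup 2 (Subgroup.closure
      {(QuotientGroup.mk g : G ⧸ M t), (QuotientGroup.mk y : G ⧸ M t)})} := by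
    intro t y hy
    haveI := hMnorm t
    have h1 := hy.2 (M t) (hMopen t)
    refine h1.to_le ?_
    have himg : Subgroup.closure
        {(QuotientGroup.mk g : G ⧸ M t), (QuotientGroup.mk y : G ⧸ M t)} =
        (Subgroup.closure {g, y}).map (QuotientGroup.mk' (M t)) := by
      rw [MonoidHom.map_closure, Set.image_pair]
      rfl
    rw [himg]
    exact Subgroup.map_mono (Subgroup.le_topologicalClosure _)
  -- measure estimate
  have hctop : (Measure.haar : Measure G) Set.univ ≠ ⊤ :=
    (IsCompact.measure_lt_top isCompact_univ).ne
  have hbound : ∀ t, (Measure.haar : Measure G) S ≤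
      ENNReal.ofReal (δ ^ t) * (Measure.haar : Measure G) Set.univ := by
    intro t
    haveI := hMnorm t
    calc (Measure.haar : Measure G) S
        ≤ (Measure.haar : Measure G) {y : G | IsPGroup 2 (Subgroup.closure
            {(QuotientGroup.mk g : G ⧸ M t), (QuotientGroup.mk y : G ⧸ M t)})} :=
          measure_mono (hsub t)
      _ = ENNReal.ofReal (probGen2 (M t) (hMnorm t) g) *
            (Measure.haar : Measure G) Set.univ := haar_prob (M t) (hMnorm t) (hMopen t) g
      _ = ENNReal.ofReal (probGen2 (M t) (hMnorm t) ((gp t).1)) *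
            (Measure.haar : Measure G) Set.univ := by
          rw [probGen2_congr (M t) (hMnorm t)
            (((QuotientGroup.eq).mpr (hgC t)).symm : (QuotientGroup.mk g : G ⧸ M t) = _)]
      _ ≤ ENNReal.ofReal (δ ^ t) * (Measure.haar : Measure G) Set.univ :=
          mul_le_mul_left (ENNReal.ofReal_le_ofReal (key t)) _
  have htend : Filter.Tendsto (fun t => ENNReal.ofReal (δ ^ t) *
      (Measure.haar : Measure G) Set.univ) Filter.atTop (nhds 0) := by
    have h1 : Filter.Tendsto (fun t : ℕ => δ ^ t) Filter.atTop (nhds 0) :=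
      tendsto_pow_atTop_nhds_zero_of_lt_one hδ0 hδ1
    have h2 : Filter.Tendsto (fun t : ℕ => ENNReal.ofReal (δ ^ t)) Filter.atTop (nhds 0) := by
      simpa using (ENNReal.tendsto_ofReal h1)
    simpa using ENNReal.Tendsto.mul_const h2 (Or.inr hctop)
  have : (Measure.haar : Measure G) S ≤ 0 :=
    ge_of_tendsto' htend hbound
  exact le_antisymm this (zero_le)

end
end
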